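/- arXiv:1812.09211 — 8 statements merged into one kernel-verified Lean document; each statement's English description precedes it below -/
import Mathlib

section
/- Let H be a complex Hilbert space, K a bounded self-adjoint operator on H, and (φ_k)_{k∈ℕ} a Hilbert basis of H consisting of eigenvectors of K, K φ_k = x_k • φ_k, where the family (x_k)_{k∈ℕ} of eigenvalues is rationally independent (linearly independent over ℚ). Then every unitary diagonal in this basis lies in the strong closure of the one-parameter group generated by K: for every sequence z : ℕ → ℂ with |z_k| = 1 for all k, every ε > 0 and every finite family ψ_1, …, ψ_M ∈ H, there exists t ∈ ℝ such that ‖exp(itK) ψ_j − Σ'_k z_k • ⟪φ_k, ψ_j⟫ • φ_k‖ < ε for all j = 1, …, M (the sum Σ'_k being the tsum over k ∈ ℕ, which converges in H). -/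
/-!
In the eigenbasis, `exp (I • t • K) ψ - ∑' k, z k • ⟪φ k, ψ⟫ • φ k` has coefficients
`(exp (x k * t * I) - z k) * ⟪φ k, ψ⟫`, so it suffices to bring `exp (x k * t * I)` close to `z k`
for the finitely many `k` outside which every `ψ j` has a small tail. That is Kronecker's theorem
for the flow `t ↦ (exp (x k * t * I))ₖ`, proved by Bohr's argument. Put
`F t = 1 + ∑ k, conj (z k) * exp (x k * t * I)`, a sum of `n + 1` unimodular terms. If
`‖F‖ ≤ B < n + 1`, then, the frequencies being rationally independent, each coefficient of `F ^ p`
is a multinomial coefficient times a unimodular number, and the largest of these is at least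
`(n + 1) ^ p / (p + 1) ^ (n + 1)`. Mean values over `[0, T]` bound every coefficient by
`sup ‖F ^ p‖ ≤ B ^ p`, which is absurd for large `p`. Hence `‖F t‖` comes arbitrarily close to
`n + 1`, which forces every term of `F t` to be close to `1`.
-/

open Complex Filter Finset Topology
open scoped InnerProductSpace ComplexConjugate

lemma norm_integral_exp_mul_I_le {μ : ℝ} (hμ : μ ≠ 0) (T : ℝ) :
    ‖∫ t in (0 : ℝ)..T, exp (μ * t * I)‖ ≤ 2 / |μ| := by
  have hμI : (μ : ℂ) * I ≠ 0 := mul_ne_zero (ofReal_ne_zero.2 hμ) I_ne_zero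
  have hint := integral_exp_mul_complex (a := 0) (b := T) hμI
  simp only [mul_right_comm (μ : ℂ) I] at hint
  rw [hint, norm_div, norm_mul, norm_I, mul_one, norm_real, Real.norm_eq_abs]
  gcongr
  calc ‖exp (μ * T * I) - exp (μ * (0 : ℝ) * I)‖
      ≤ ‖exp (↑(μ * T) * I)‖ + ‖exp (↑(μ * 0) * I)‖ := by push_cast; exact norm_sub_le _ _
    _ = 2 := by rw [norm_exp_ofReal_mul_I, norm_exp_ofReal_mul_I]; norm_num

lemma tendsto_average_exp_mul_I (μ : ℝ) :
    Tendsto (fun T : ℝ => (T : ℂ)⁻¹ * ∫ t in (0 : ℝ)..T, exp (μ * t * I)) atTop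
      (𝓝 (if μ = 0 then 1 else 0)) := by
  split_ifs with hμ
  · subst hμ
    refine tendsto_const_nhds.congr' ?_
    filter_upwards [eventually_ne_atTop 0] with T hT
    simp [hT]
  · refine squeeze_zero_norm' ?_ ((tendsto_const_nhds (x := 2 / |μ|)).div_atTop tendsto_id)
    filter_upwards [eventually_gt_atTop 0] with T hT
    rw [norm_mul, norm_inv, norm_real, Real.norm_of_nonneg hT.le, inv_mul_eq_div, id]
    exact div_le_div_of_nonneg_right (norm_integral_exp_mul_I_le hμ T) hT.le

/-- The mean of `(∑ f, c f * exp (μ f * t * I)) * exp (-lam * t * I)` over `[0, T]` tends to the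
coefficient of the frequency `lam`. -/
lemma norm_sum_filter_le_of_norm_sum_exp_le {α : Type*} [Fintype α] (c : α → ℂ) (μ : α → ℝ)
    (lam : ℝ) {B : ℝ} (hB : ∀ t : ℝ, ‖∑ f, c f * exp (μ f * t * I)‖ ≤ B) :
    ‖∑ f with μ f = lam, c f‖ ≤ B := by
  set G : ℝ → ℂ := fun t => (∑ f, c f * exp (μ f * t * I)) * exp (-lam * t * I)
  have hG : ∀ t, G t = ∑ f, c f * exp (↑(μ f - lam) * t * I) := fun t => by
    simp only [G, sum_mul, mul_assoc, ← exp_add]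
    congr! 3
    push_cast
    ring
  have hlim : Tendsto (fun T : ℝ => (T : ℂ)⁻¹ * ∫ t in (0 : ℝ)..T, G t) atTop
      (𝓝 (∑ f with μ f = lam, c f)) := by
    have := tendsto_finsetSum univ fun f _ =>
      (tendsto_average_exp_mul_I (μ f - lam)).const_mul (c f)
    simp only [sub_eq_zero, mul_ite, mul_one, mul_zero, ← sum_filter] at this
    refine this.congr fun T => ?_
    rw [funext hG, intervalIntegral.integral_finsetSum, mul_sum]
    · refine sum_congr rfl fun f _ => ?_
      rw [intervalIntegral.integral_const_mul]
      ring
    · intro f _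
      exact (by fun_prop : Continuous _).intervalIntegrable _ _
  refine le_of_tendsto hlim.norm ?_
  filter_upwards [eventually_gt_atTop 0] with T hT
  have hGB : ∀ t, ‖G t‖ ≤ B := fun t => by
    simpa [G, norm_mul, ← ofReal_neg, ← ofReal_mul] using hB t
  have := intervalIntegral.norm_integral_le_of_norm_le_const (a := 0) (b := T) fun t _ => hGB t
  rw [norm_mul, norm_inv, norm_real, Real.norm_of_nonneg hT.le]
  rw [sub_zero, abs_of_pos hT] at this
  calc T⁻¹ * ‖∫ t in (0 : ℝ)..T, G t‖ ≤ T⁻¹ * (B * T) := by gcongr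
    _ = B := by field_simp

lemma sum_mul_exp_mul_I_pow {ι : Type*} [Fintype ι] (a : ι → ℂ) (y : ι → ℝ) (p : ℕ) (t : ℝ) :
    (∑ j, a j * exp (y j * t * I)) ^ p
      = ∑ f : Fin p → ι, (∏ i, a (f i)) * exp (↑(∑ i, y (f i)) * t * I) := by
  rw [← Fin.prod_const, prod_univ_sum, Fintype.piFinset_univ]
  refine sum_congr rfl fun f _ => ?_
  rw [prod_mul_distrib, ← exp_sum]
  push_cast
  rw [sum_mul, sum_mul]

def fiberCard {α ι : Type*} [Fintype α] [DecidableEq ι] (f : α → ι) (j : ι) : ℕ :=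
  #{i | f i = j}

section fiberCard

variable {α ι : Type*} [Fintype α] [Fintype ι] [DecidableEq ι]

lemma sum_comp_eq_sum_fiberCard_mul (f : α → ι) (y : ι → ℝ) :
    ∑ i, y (f i) = ∑ j, (fiberCard f j : ℝ) * y j := by
  rw [← sum_fiberwise' univ f y]
  simp [fiberCard]

lemma prod_comp_eq_prod_pow_fiberCard (f : α → ι) (a : ι → ℂ) :
    ∏ i, a (f i) = ∏ j, a j ^ fiberCard f j := by
  rw [← prod_fiberwise' univ f a]
  simp [fiberCard]

lemma sum_fiberCard (f : α → ι) : ∑ j, fiberCard f j = Fintype.card α :=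
  (card_eq_sum_card_fiberwise fun i _ => mem_univ (f i)).symm

lemma card_range_fiberCard_le (p : ℕ) :
    #(univ.image (fiberCard : (Fin p → ι) → ι → ℕ)) ≤ (p + 1) ^ Fintype.card ι := by
  calc #(univ.image (fiberCard : (Fin p → ι) → ι → ℕ))
      ≤ #(Fintype.piFinset fun _ : ι => range (p + 1)) := by
        refine card_le_card fun b hb => ?_
        obtain ⟨f, -, rfl⟩ := mem_image.1 hb
        simp only [Fintype.mem_piFinset, mem_range, Nat.lt_succ_iff]
        exact fun j => (card_filter_le _ _).trans (by simp)
    _ = (p + 1) ^ Fintype.card ι := by simp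

end fiberCard

lemma exists_pow_mul_add_one_pow_lt {B c : ℝ} (hB : 0 ≤ B) (hBc : B < c) (k : ℕ) :
    ∃ p : ℕ, B ^ p * (p + 1) ^ k < c ^ p := by
  have hc : 0 < c := hB.trans_lt hBc
  have hr : |B / c| < 1 := by
    rw [abs_of_nonneg (by positivity), div_lt_one hc]
    exact hBc
  obtain ⟨p, hp, hp1⟩ := (((tendsto_pow_const_mul_const_pow_of_abs_lt_one k hr).eventually
    (gt_mem_nhds (by positivity : (0 : ℝ) < (2 ^ k)⁻¹))).and (eventually_ge_atTop 1)).exists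
  refine ⟨p, ?_⟩
  have hp1' : (1 : ℝ) ≤ p := by exact_mod_cast hp1
  calc B ^ p * (p + 1) ^ k ≤ B ^ p * (2 * p) ^ k := by gcongr; linarith
    _ = 2 ^ k * c ^ p * ((p : ℝ) ^ k * (B / c) ^ p) := by
        rw [div_pow, mul_pow]; field_simp
    _ < 2 ^ k * c ^ p * (2 ^ k)⁻¹ := by gcongr
    _ = c ^ p := by field_simp

def SeparatesCountVectors {ι : Type*} [Fintype ι] (y : ι → ℝ) : Prop :=
  ∀ b b' : ι → ℕ, ∑ j, b j = ∑ j, b' j → ∑ j, (b j : ℝ) * y j = ∑ j, (b' j : ℝ) * y j → b = b'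

section Bohr

variable {ι : Type*} [Fintype ι] {a : ι → ℂ} {y : ι → ℝ}

/-- The `f` sharing the count vector of `f₀` are exactly the terms of frequency `∑ i, y (f₀ i)` in
the expansion of `(∑ j, a j * exp (y j * t * I)) ^ p`, and all have the same unimodular
coefficient. -/
lemma card_fiberCard_eq_le_pow [DecidableEq ι] (ha : ∀ j, ‖a j‖ = 1)
    (hy : SeparatesCountVectors y)
    {B : ℝ} (hB : ∀ t : ℝ, ‖∑ j, a j * exp (y j * t * I)‖ ≤ B) {p : ℕ} (f₀ : Fin p → ι) :
    (#{f : Fin p → ι | fiberCard f = fiberCard f₀} : ℝ) ≤ B ^ p := by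
  set lam := ∑ i, y (f₀ i)
  have hfiber : univ.filter (fun f : Fin p → ι => ∑ i, y (f i) = lam)
      = univ.filter (fun f => fiberCard f = fiberCard f₀) := by
    refine Finset.filter_congr fun f _ => ⟨fun h => hy _ _ ?_ ?_, fun h => ?_⟩
    · rw [sum_fiberCard, sum_fiberCard]
    · rw [← sum_comp_eq_sum_fiberCard_mul, ← sum_comp_eq_sum_fiberCard_mul, h]
    · simp only [lam, sum_comp_eq_sum_fiberCard_mul, h]
  have hcoeff : ∀ f ∈ univ.filter (fun f : Fin p → ι => fiberCard f = fiberCard f₀),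
      ∏ i, a (f i) = ∏ j, a j ^ fiberCard f₀ j := fun f hf => by
    rw [prod_comp_eq_prod_pow_fiberCard, (mem_filter.1 hf).2]
  have hmean := norm_sum_filter_le_of_norm_sum_exp_le (fun f : Fin p → ι => ∏ i, a (f i))
    (fun f => ∑ i, y (f i)) lam (B := B ^ p) fun t => by
      rw [← sum_mul_exp_mul_I_pow, norm_pow]
      exact pow_le_pow_left₀ (norm_nonneg _) (hB t) p
  simpa [hfiber, sum_congr rfl hcoeff, norm_prod, ha] using hmean

lemma card_pow_le_pow_mul_of_norm_sum_exp_le [Nonempty ι] (ha : ∀ j, ‖a j‖ = 1)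
    (hy : SeparatesCountVectors y)
    {B : ℝ} (hB : ∀ t : ℝ, ‖∑ j, a j * exp (y j * t * I)‖ ≤ B) (p : ℕ) :
    (Fintype.card ι : ℝ) ^ p ≤ B ^ p * (p + 1) ^ Fintype.card ι := by
  classical
  set n := Fintype.card ι
  have hpos : (0 : ℝ) < (p + 1) ^ n := by positivity
  obtain ⟨b, hb, hcard⟩ := exists_le_card_fiber_of_nsmul_le_card_of_maps_to
    (s := (univ : Finset (Fin p → ι))) (b := (n : ℝ) ^ p / (p + 1) ^ n)
    (fun f _ => mem_image_of_mem fiberCard (mem_univ f)) (univ_nonempty.image _) (by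
      calc _ ≤ ((p + 1) ^ n : ℝ) * ((n : ℝ) ^ p / (p + 1) ^ n) := by
            rw [nsmul_eq_mul]; gcongr; exact_mod_cast card_range_fiberCard_le p
        _ = #(univ : Finset (Fin p → ι)) := by simp [mul_div_cancel₀ _ hpos.ne', n])
  obtain ⟨f₀, -, rfl⟩ := mem_image.1 hb
  rw [← div_le_iff₀ hpos]
  exact hcard.trans (card_fiberCard_eq_le_pow ha hy hB f₀)

lemma exists_lt_norm_sum_mul_exp_mul_I (ha : ∀ j, ‖a j‖ = 1)
    (hy : SeparatesCountVectors y)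
    {B : ℝ} (hB : B < Fintype.card ι) : ∃ t : ℝ, B < ‖∑ j, a j * exp (y j * t * I)‖ := by
  by_contra! hle
  have hB0 : 0 ≤ B := (norm_nonneg _).trans (hle 0)
  have : Nonempty ι := Fintype.card_pos_iff.1 (by exact_mod_cast hB0.trans_lt hB)
  obtain ⟨p, hp⟩ := exists_pow_mul_add_one_pow_lt hB0 hB (Fintype.card ι)
  exact hp.not_ge (card_pow_le_pow_mul_of_norm_sum_exp_le ha hy hle p)

end Bohr

lemma norm_sub_sq_lt_of_card_sub_lt_norm_sum {ι E : Type*} [Fintype ι] [NormedAddCommGroup E]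
    [InnerProductSpace ℝ E] {u : ι → E} (hu : ∀ j, ‖u j‖ = 1) {η : ℝ}
    (h : Fintype.card ι - η < ‖∑ j, u j‖) {i j : ι} (hij : i ≠ j) :
    ‖u i - u j‖ ^ 2 < 4 * η := by
  classical
  have hj : j ∈ univ.erase i := mem_erase.2 ⟨hij.symm, mem_univ j⟩
  have hsplit : ∑ k, u k = u i + u j + ∑ k ∈ (univ.erase i).erase j, u k := by
    rw [← add_sum_erase _ _ (mem_univ i), ← add_sum_erase _ _ hj, add_assoc]
  have hcard : (#((univ.erase i).erase j) : ℝ) = Fintype.card ι - 2 := by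
    rw [eq_sub_iff_add_eq, ← card_univ, ← card_erase_add_one (mem_univ i),
      ← card_erase_add_one hj]
    push_cast
    ring
  have hrest : ‖∑ k ∈ (univ.erase i).erase j, u k‖ ≤ Fintype.card ι - 2 := by
    rw [← hcard]
    simpa [hu] using norm_sum_le ((univ.erase i).erase j) u
  have hpair : Fintype.card ι - η < ‖u i + u j‖ + (Fintype.card ι - 2) := by
    calc _ < ‖∑ k, u k‖ := h
      _ ≤ _ := by rw [hsplit]; exact (norm_add_le _ _).trans (by gcongr)
  have hpar := parallelogram_law_with_norm ℝ (u i) (u j)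
  rw [hu, hu] at hpar
  nlinarith [norm_nonneg (u i + u j), norm_nonneg (u i - u j)]

lemma LinearIndependent.separatesCountVectors_elim_zero {ι : Type*} [Fintype ι] {x : ι → ℝ}
    (hx : LinearIndependent ℚ x) : SeparatesCountVectors fun j : Option ι => j.elim 0 x := by
  intro b b' hsum hlin
  simp only [Fintype.sum_option, Option.elim_none, Option.elim_some, mul_zero, zero_add]
    at hsum hlin
  have hsome : ∀ k, b (some k) = b' (some k) := fun k => by
    have h := Fintype.linearIndependent_iff.1 hx (fun k => (b (some k) : ℚ) - b' (some k)) (by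
      simp only [sub_smul, sum_sub_distrib, Nat.cast_smul_eq_nsmul, nsmul_eq_mul]
      exact sub_eq_zero.2 hlin) k
    exact_mod_cast sub_eq_zero.1 h
  have hnone : b none = b' none := by
    rw [sum_congr rfl fun k _ => hsome k] at hsum
    omega
  funext j
  cases j with
  | none => exact hnone
  | some k => exact hsome k

lemma norm_sub_eq_norm_conj_mul_sub_one {w e : ℂ} (hw : ‖w‖ = 1) :
    ‖e - w‖ = ‖1 - conj w * e‖ := by
  have hwc : w * conj w = 1 := by
    rw [mul_conj, normSq_eq_norm_sq, hw]; norm_num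
  rw [show e - w = -w * (1 - conj w * e) by linear_combination (-e) * hwc, norm_mul, norm_neg,
    hw, one_mul]

/-- Kronecker's theorem. -/
theorem exists_forall_norm_exp_mul_I_sub_lt {ι : Type*} [Fintype ι] {x : ι → ℝ}
    (hx : LinearIndependent ℚ x) {w : ι → ℂ} (hw : ∀ k, ‖w k‖ = 1) {δ : ℝ} (hδ : 0 < δ) :
    ∃ t : ℝ, ∀ k, ‖exp (x k * t * I) - w k‖ < δ := by
  set a : Option ι → ℂ := fun j => j.elim 1 fun k => conj (w k)
  set y : Option ι → ℝ := fun j => j.elim 0 x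
  have ha : ∀ j, ‖a j‖ = 1 := by rintro (_ | k) <;> simp [a, hw]
  obtain ⟨t, ht⟩ := exists_lt_norm_sum_mul_exp_mul_I ha
    hx.separatesCountVectors_elim_zero (B := Fintype.card (Option ι) - δ ^ 2 / 4)
    (by linarith [sq_pos_of_pos hδ])
  set u : Option ι → ℂ := fun j => a j * exp (y j * t * I)
  have hu : ∀ j, ‖u j‖ = 1 := fun j => by
    simp only [u, norm_mul, ha, one_mul, ← ofReal_mul, norm_exp_ofReal_mul_I]
  refine ⟨t, fun k => ?_⟩
  have hclose := norm_sub_sq_lt_of_card_sub_lt_norm_sum hu ht (Option.some_ne_none k).symm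
  rw [norm_sub_eq_norm_conj_mul_sub_one (hw k)]
  refine lt_of_pow_lt_pow_left₀ 2 hδ.le ?_
  simpa [u, a, y, mul_div_cancel₀] using hclose

lemma lp.hasSum_norm_sq {α : Type*} {E : α → Type*} [∀ i, NormedAddCommGroup (E i)]
    (f : lp E 2) : HasSum (fun i => ‖f i‖ ^ 2) (‖f‖ ^ 2) := by
  simpa using lp.hasSum_norm (p := 2) (by norm_num) f

lemma NormedSpace.exp_apply_of_apply_eq_smul {𝕜 E : Type*} [RCLike 𝕜] [NormedAddCommGroup E]
    [NormedSpace 𝕜 E] [CompleteSpace E] {A : E →L[𝕜] E} {v : E} {c : 𝕜} (h : A v = c • v) :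
    NormedSpace.exp A v = NormedSpace.exp c • v := by
  have hpow : ∀ n : ℕ, (A ^ n) v = c ^ n • v := fun n => by
    induction n with
    | zero => simp
    | succ n ih => rw [pow_succ', mul_apply_eq_comp, ih, map_smul, h, smul_smul, pow_succ]
  have hA :=
    (NormedSpace.exp_series_hasSum_exp' (𝕂 := 𝕜) A).mapL (ContinuousLinearMap.apply 𝕜 E v)
  have hc := (NormedSpace.exp_series_hasSum_exp' (𝕂 := 𝕜) c).smul_const v
  simp only [ContinuousLinearMap.apply_apply, smul_apply, hpow, smul_smul] at hA
  exact hA.unique (by simpa only [smul_eq_mul] using hc)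

namespace HilbertBasis

variable {ι 𝕜 E : Type*} [RCLike 𝕜] [NormedAddCommGroup E] [InnerProductSpace 𝕜 E]
  (b : HilbertBasis ι 𝕜 E)

lemma hasSum_norm_inner_sq (v : E) : HasSum (fun i => ‖⟪b i, v⟫_𝕜‖ ^ 2) (‖v‖ ^ 2) := by
  simpa [b.repr_apply_apply] using lp.hasSum_norm_sq (b.repr v)

noncomputable def diagonal (d : ι → 𝕜) (v : E) : E := ∑' i, d i • ⟪b i, v⟫_𝕜 • b i

variable {d : ι → 𝕜} {C : ℝ}

lemma memℓp_mul_repr (hd : ∀ i, ‖d i‖ ≤ C) (v : E) : Memℓp (fun i => d i * b.repr v i) 2 :=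
  ((lp.memℓp (b.repr v)).norm.const_mul C).mono fun i => by
    rw [norm_mul]; gcongr; exact hd i

lemma diagonal_eq_repr_symm (hd : ∀ i, ‖d i‖ ≤ C) (v : E) :
    b.diagonal d v = b.repr.symm ⟨fun i => d i * b.repr v i, b.memℓp_mul_repr hd v⟩ := by
  refine Eq.trans ?_ (b.hasSum_repr_symm _).tsum_eq
  simp only [diagonal, smul_smul, b.repr_apply_apply]

lemma hasSum_diagonal (hd : ∀ i, ‖d i‖ ≤ C) (v : E) :
    HasSum (fun i => d i • ⟪b i, v⟫_𝕜 • b i) (b.diagonal d v) := by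
  rw [b.diagonal_eq_repr_symm hd]
  convert b.hasSum_repr_symm _ using 2 with i
  simp [smul_smul, b.repr_apply_apply]

lemma hasSum_norm_diagonal_sq (hd : ∀ i, ‖d i‖ ≤ C) (v : E) :
    HasSum (fun i => ‖d i * ⟪b i, v⟫_𝕜‖ ^ 2) (‖b.diagonal d v‖ ^ 2) := by
  rw [b.diagonal_eq_repr_symm hd, LinearIsometryEquiv.norm_map]
  convert lp.hasSum_norm_sq _ using 2 with i
  simp [b.repr_apply_apply]

lemma diagonal_sub {d' : ι → 𝕜} {C' : ℝ} (hd : ∀ i, ‖d i‖ ≤ C) (hd' : ∀ i, ‖d' i‖ ≤ C')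
    (v : E) : b.diagonal d v - b.diagonal d' v = b.diagonal (fun i => d i - d' i) v := by
  simpa [diagonal, sub_smul] using
    ((b.hasSum_diagonal hd v).sub (b.hasSum_diagonal hd' v)).tsum_eq.symm

lemma norm_diagonal_sq_le (hd : ∀ i, ‖d i‖ ≤ C) {s : Finset ι} {δ : ℝ}
    (hs : ∀ i ∈ s, ‖d i‖ ≤ δ) (v : E) :
    ‖b.diagonal d v‖ ^ 2 ≤ δ ^ 2 * ‖v‖ ^ 2 + C ^ 2 * ∑' i : {i // i ∉ s}, ‖⟪b i, v⟫_𝕜‖ ^ 2 := by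
  have hv := b.hasSum_norm_inner_sq v
  have hsq : ∀ i, ‖d i * ⟪b i, v⟫_𝕜‖ ^ 2 = ‖d i‖ ^ 2 * ‖⟪b i, v⟫_𝕜‖ ^ 2 := fun i => by
    rw [norm_mul, mul_pow]
  have hmain : ∑ i ∈ s, ‖d i * ⟪b i, v⟫_𝕜‖ ^ 2 ≤ δ ^ 2 * ‖v‖ ^ 2 := by
    calc ∑ i ∈ s, ‖d i * ⟪b i, v⟫_𝕜‖ ^ 2 ≤ ∑ i ∈ s, δ ^ 2 * ‖⟪b i, v⟫_𝕜‖ ^ 2 := by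
          refine sum_le_sum fun i hi => ?_
          rw [hsq]; gcongr; exact hs i hi
      _ ≤ δ ^ 2 * ‖v‖ ^ 2 := by
          rw [← mul_sum]; gcongr; exact sum_le_hasSum s (fun i _ => by positivity) hv
  have htail : ∑' i : {i // i ∉ s}, ‖d i * ⟪b i, v⟫_𝕜‖ ^ 2
      ≤ C ^ 2 * ∑' i : {i // i ∉ s}, ‖⟪b i, v⟫_𝕜‖ ^ 2 := by
    rw [← tsum_mul_left]
    refine (b.hasSum_norm_diagonal_sq hd v).summable.subtype _ |>.tsum_le_tsum (fun i => ?_)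
      ((hv.summable.subtype _).mul_left _)
    rw [hsq]; gcongr; exact hd i
  rw [← (b.hasSum_norm_diagonal_sq hd v).tsum_eq,
    ← (b.hasSum_norm_diagonal_sq hd v).summable.sum_add_tsum_compl (s := s)]
  exact add_le_add hmain htail

lemma exp_apply_eq_diagonal [CompleteSpace E] {A : E →L[𝕜] E} {c : ι → 𝕜}
    (hA : ∀ i, A (b i) = c i • b i) (v : E) :
    NormedSpace.exp A v = b.diagonal (fun i => NormedSpace.exp (c i)) v := by
  have h := (b.hasSum_repr v).mapL (NormedSpace.exp A)
  simp only [map_smul, NormedSpace.exp_apply_of_apply_eq_smul (hA _),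
    b.repr_apply_apply, smul_comm (⟪b _, v⟫_𝕜)] at h
  exact h.tsum_eq.symm

end HilbertBasis

lemma HilbertBasis.exp_I_smul_smul_apply_eq_diagonal {ι E : Type*} [NormedAddCommGroup E]
    [InnerProductSpace ℂ E] [CompleteSpace E] (b : HilbertBasis ι ℂ E) {K : E →L[ℂ] E}
    {x : ι → ℝ} (hx : ∀ k, K (b k) = (x k : ℂ) • b k) (t : ℝ) (v : E) :
    NormedSpace.exp (I • ((t : ℂ) • K)) v = b.diagonal (fun k => exp (x k * t * I)) v := by
  have hA : ∀ k, (I • ((t : ℂ) • K)) (b k) = (x k * t * I : ℂ) • b k := fun k => by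
    simp only [smul_apply, hx, smul_smul]
    ring_nf
  rw [b.exp_apply_eq_diagonal hA, ← Complex.exp_eq_exp_ℂ]

theorem diagonal_unitary_strong_limit_of_oneParameterGroup_general
    {H : Type*} [NormedAddCommGroup H] [InnerProductSpace ℂ H] [CompleteSpace H]
    (φ : HilbertBasis ℕ ℂ H) (K : H →L[ℂ] H)
    (x : ℕ → ℝ) (hx : ∀ k, K (φ k) = (x k : ℂ) • φ k)
    (hind : LinearIndependent ℚ x)
    (z : ℕ → ℂ) (hz : ∀ k, ‖z k‖ = 1)
    (ε : ℝ) (hε : 0 < ε) (M : ℕ) (ψ : Fin M → H) :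
    ∃ t : ℝ, ∀ j : Fin M,
      ‖NormedSpace.exp (Complex.I • ((t : ℂ) • K)) (ψ j)
        - ∑' k : ℕ, z k • ⟪(φ k : H), ψ j⟫_ℂ • (φ k : H)‖ < ε := by
  obtain ⟨s, hs⟩ : ∃ s : Finset ℕ, ∀ j, ∑' k : {k // k ∉ s}, ‖⟪φ k, ψ j⟫_ℂ‖ ^ 2 < ε ^ 2 / 8 :=
    (eventually_all.2 fun j =>
      (tendsto_tsum_compl_atTop_zero fun k => ‖⟪φ k, ψ j⟫_ℂ‖ ^ 2).eventually
      (gt_mem_nhds (by positivity))).exists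
  obtain ⟨δ, hδψ, hδ⟩ : ∃ δ : ℝ, (∀ j, δ ^ 2 * ‖ψ j‖ ^ 2 < ε ^ 2 / 2) ∧ 0 < δ := by
    have hlim : ∀ j, Tendsto (fun δ : ℝ => δ ^ 2 * ‖ψ j‖ ^ 2) (𝓝[>] 0) (𝓝 0) := fun j => by
      have hcont : Continuous fun δ : ℝ => δ ^ 2 * ‖ψ j‖ ^ 2 := by fun_prop
      simpa using (hcont.tendsto 0).mono_left nhdsWithin_le_nhds
    exact ((eventually_all.2 fun j => (hlim j).eventually (gt_mem_nhds (by positivity))).and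
      self_mem_nhdsWithin).exists
  obtain ⟨t, ht⟩ := exists_forall_norm_exp_mul_I_sub_lt
    (hind.comp ((↑) : s → ℕ) Subtype.val_injective) (fun k => hz k) hδ
  refine ⟨t, fun j => ?_⟩
  have he : ∀ k, ‖exp (x k * t * I)‖ ≤ 1 := fun k => by
    rw [← ofReal_mul, norm_exp_ofReal_mul_I]
  have hz1 : ∀ k, ‖z k‖ ≤ 1 := fun k => (hz k).le
  have hdist : ∀ k, ‖exp (x k * t * I) - z k‖ ≤ 2 := fun k =>
    (norm_sub_le _ _).trans (by linarith [he k, hz1 k])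
  change ‖_ - φ.diagonal z (ψ j)‖ < ε
  rw [φ.exp_I_smul_smul_apply_eq_diagonal hx, φ.diagonal_sub he hz1]
  have hbound := φ.norm_diagonal_sq_le hdist (s := s) (fun k hk => (ht ⟨k, hk⟩).le) (ψ j)
  refine lt_of_pow_lt_pow_left₀ 2 hε.le ?_
  linarith [hδψ j, hs j]

/-- Every unitary which is diagonal in a Hilbert basis of eigenvectors of a bounded
self-adjoint operator `K` with rationally independent eigenvalues lies in the strong
closure of the one-parameter group generated by `K`. -/
theorem diagonal_unitary_strong_limit_of_oneParameterGroup
    {H : Type*} [NormedAddCommGroup H] [InnerProductSpace ℂ H] [CompleteSpace H]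
    (φ : HilbertBasis ℕ ℂ H) (K : H →L[ℂ] H)
    (hKsa : ∀ ψ χ : H, ⟪K ψ, χ⟫_ℂ = ⟪ψ, K χ⟫_ℂ)
    (x : ℕ → ℝ) (hx : ∀ k, K (φ k) = (x k : ℂ) • φ k)
    (hind : LinearIndependent ℚ x)
    (z : ℕ → ℂ) (hz : ∀ k, ‖z k‖ = 1)
    (ε : ℝ) (hε : 0 < ε) (M : ℕ) (ψ : Fin M → H) :
    ∃ t : ℝ, ∀ j : Fin M,
      ‖NormedSpace.exp (Complex.I • ((t : ℂ) • K)) (ψ j)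
        - ∑' k : ℕ, z k • ⟪(φ k : H), ψ j⟫_ℂ • (φ k : H)‖ < ε :=
  diagonal_unitary_strong_limit_of_oneParameterGroup_general φ K x hx hind z hz ε hε M ψ
end

section
/- Let H_0, H_1, …, H_N be bounded self-adjoint operators on a complex Hilbert space H, and for y ∈ ℝ^N write H(y) = H_0 + Σ_{j=1}^N y_j H_j. Then the dynamical group equals the restricted dynamical group: the closure, in the strong operator topology, of the subgroup of invertible bounded operators generated by {exp(itH(y)) : t ∈ ℝ, y ∈ ℝ^N} equals the closure in the strong operator topology of the subgroup generated by {exp(itH_j) : t ∈ ℝ, j = 0, …, N}. -/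
/-!
Both groups are generated by one-parameter groups `t ↦ exp (t • x)`: the first with `x`
ranging over `i H(y)`, the second over `i H_0, …, i H_N`, and these two sets of directions span
the same real vector space. For a closed submonoid `S` of a Banach algebra, the directions `x` with
`exp (t • x) ∈ S` for all real `t` form a real vector space, because closure under addition is the
Lie product formula `exp (a + b) = lim (exp (a / n) * exp (b / n)) ^ n`. Applied to the norm
closure of each group, this puts each group inside the norm closure of the other, and the strong
operator topology is coarser than the norm topology.
-/

open scoped InnerProductSpace

/-- The closure of a set of bounded operators in the strong operator topology,
characterized via finite families of vectors and `ε`-approximation. -/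
def strongClosure {H : Type*} [NormedAddCommGroup H] [InnerProductSpace ℂ H]
    (S : Set (H →L[ℂ] H)) : Set (H →L[ℂ] H) :=
  {T | ∀ ε : ℝ, 0 < ε → ∀ (M : ℕ) (ψ : Fin M → H),
    ∃ W ∈ S, ∀ j : Fin M, ‖W (ψ j) - T (ψ j)‖ < ε}

open NormedSpace Filter Topology Asymptotics

theorem norm_pow_sub_pow_le {R : Type*} [SeminormedRing R] [NormOneClass R] {x y : R} {M : ℝ}
    (hx : ‖x‖ ≤ M) (hy : ‖y‖ ≤ M) (n : ℕ) :
    ‖x ^ n - y ^ n‖ ≤ n * M ^ (n - 1) * ‖x - y‖ := by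
  have hM : 0 ≤ M := (norm_nonneg x).trans hx
  induction n with
  | zero => simp
  | succ n ih =>
    have hMn : M * (n * M ^ (n - 1)) = n * M ^ n := by
      rcases n with _ | n
      · simp
      · simp only [Nat.add_sub_cancel]; ring
    calc ‖x ^ (n + 1) - y ^ (n + 1)‖ = ‖x * (x ^ n - y ^ n) + (x - y) * y ^ n‖ := by
          rw [pow_succ' x, pow_succ' y]; congr 1; noncomm_ring
      _ ≤ M * (n * M ^ (n - 1) * ‖x - y‖) + ‖x - y‖ * M ^ n := by
          refine (norm_add_le _ _).trans (add_le_add ?_ ?_)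
          · exact (norm_mul_le _ _).trans (mul_le_mul hx ih (norm_nonneg _) hM)
          · exact (norm_mul_le _ _).trans (mul_le_mul_of_nonneg_left
              ((norm_pow_le y n).trans (pow_le_pow_left₀ (norm_nonneg y) hy n)) (norm_nonneg _))
      _ = (n + 1 : ℕ) * M ^ (n + 1 - 1) * ‖x - y‖ := by
          rw [Nat.add_sub_cancel]; push_cast; linear_combination ‖x - y‖ * hMn

theorem span_range_add_sum_smul {R V ι : Type*} [Ring R] [AddCommGroup V] [Module R V]
    [Fintype ι] (v₀ : V) (w : ι → V) :
    Submodule.span R (Set.range fun y : ι → R => v₀ + ∑ j, y j • w j) =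
      Submodule.span R (insert v₀ (Set.range w)) := by
  classical
  apply le_antisymm <;> rw [Submodule.span_le]
  · rintro _ ⟨y, rfl⟩
    refine add_mem (Submodule.subset_span (Set.mem_insert _ _)) (Submodule.sum_mem _ fun j _ => ?_)
    exact Submodule.smul_mem _ _
      (Submodule.subset_span (Set.mem_insert_of_mem _ (Set.mem_range_self j)))
  · have h₀ : v₀ ∈ Submodule.span R (Set.range fun y : ι → R => v₀ + ∑ j, y j • w j) :=
      Submodule.subset_span ⟨0, by simp⟩
    rintro _ (rfl | ⟨j, rfl⟩)
    · exact h₀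
    · simpa [Pi.single_apply] using
        Submodule.sub_mem _ (Submodule.subset_span (Set.mem_range_self (Pi.single j (1 : R)))) h₀

section BanachAlgebra

variable {𝔸 : Type*} [NormedRing 𝔸] [NormedAlgebra ℝ 𝔸]

theorem norm_exp_le_exp_norm [NormOneClass 𝔸] (x : 𝔸) : ‖exp x‖ ≤ Real.exp ‖x‖ := by
  rw [exp_eq_tsum ℝ, Real.exp_eq_exp_ℝ, exp_eq_tsum_div]
  refine (norm_tsum_le_tsum_norm (norm_expSeries_summable' x)).trans
    (Summable.tsum_le_tsum (fun n => ?_) (norm_expSeries_summable' x)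
      (Real.summable_pow_div_factorial ‖x‖))
  rw [norm_smul, div_eq_inv_mul, norm_inv, RCLike.norm_natCast]
  gcongr
  exact norm_pow_le x n

theorem norm_exp_smul_le [NormOneClass 𝔸] {t : ℝ} (ht : 0 ≤ t) (a : 𝔸) :
    ‖exp (t • a)‖ ≤ Real.exp (t * ‖a‖) := by
  simpa [norm_smul, abs_of_nonneg ht] using norm_exp_le_exp_norm (t • a)

variable [CompleteSpace 𝔸]

theorem isBigO_exp_sub_one_sub : (fun x : 𝔸 => exp x - 1 - x) =O[𝓝 0] (‖·‖ ^ 2) := by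
  simpa [FormalMultilinearSeries.partialSum, Finset.sum_range_succ, expSeries_apply_eq, sub_sub]
    using (exp_hasFPowerSeriesAt_zero (𝕂 := ℝ) (𝔸 := 𝔸)).isBigO_sub_partialSum_pow 2

theorem isBigO_exp_smul_sub_one_sub (a : 𝔸) :
    (fun t : ℝ => exp (t • a) - 1 - t • a) =O[𝓝 0] (· ^ 2) := by
  have ha : Tendsto (fun t : ℝ => t • a) (𝓝 0) (𝓝 0) := by
    simpa using (continuous_id.smul continuous_const).tendsto (0 : ℝ) (f := fun t : ℝ => t • a)
  refine (isBigO_exp_sub_one_sub.comp_tendsto ha).trans (IsBigO.of_bound (‖a‖ ^ 2) ?_)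
  filter_upwards with t
  simp [norm_smul, mul_pow, mul_comm]

theorem isBigO_exp_smul_mul_exp_smul_sub (a b : 𝔸) :
    (fun t : ℝ => exp (t • a) * exp (t • b) - exp (t • (a + b))) =O[𝓝 0] (· ^ 2) := by
  set R : 𝔸 → 𝔸 := fun x => exp x - 1 - x
  have key (t : ℝ) : exp (t • a) * exp (t • b) - exp (t • (a + b)) =
      (t • a) * (t • b) + (1 + t • a) * R (t • b) + R (t • a) * exp (t • b) - R (t • (a + b)) := by
    simp only [R, smul_add]
    generalize t • a = x
    generalize t • b = y
    noncomm_ring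
  have hab : (fun t : ℝ => (t • a) * (t • b)) =O[𝓝 0] (· ^ 2) := by
    refine IsBigO.of_bound (‖a‖ * ‖b‖) (Eventually.of_forall fun t => ?_)
    calc ‖(t • a) * (t • b)‖ ≤ ‖t • a‖ * ‖t • b‖ := norm_mul_le _ _
      _ = ‖a‖ * ‖b‖ * ‖t ^ 2‖ := by simp only [norm_smul, norm_pow]; ring
  have hbdd : (fun t : ℝ => 1 + t • a) =O[𝓝 0] (fun _ => (1 : ℝ)) :=
    ((continuous_const.add (continuous_id.smul continuous_const)).tendsto 0).isBigO_one ℝ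
  have hexp : (fun t : ℝ => exp (t • b)) =O[𝓝 0] (fun _ => (1 : ℝ)) :=
    ((exp_analytic (𝕂 := ℝ) _).continuousAt.tendsto.comp
      ((continuous_id.smul continuous_const).tendsto 0)).isBigO_one ℝ
  simp only [key]
  refine ((hab.add ?_).add ?_).sub (isBigO_exp_smul_sub_one_sub (a + b))
  · simpa using hbdd.mul (isBigO_exp_smul_sub_one_sub b)
  · simpa using (isBigO_exp_smul_sub_one_sub a).mul hexp

theorem norm_exp_mul_exp_pow_sub_exp_le [NormOneClass 𝔸] (a b : 𝔸) {n : ℕ} (hn : n ≠ 0) :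
    ‖(exp ((n : ℝ)⁻¹ • a) * exp ((n : ℝ)⁻¹ • b)) ^ n - exp (a + b)‖ ≤
      Real.exp (‖a‖ + ‖b‖) *
        (n * ‖exp ((n : ℝ)⁻¹ • a) * exp ((n : ℝ)⁻¹ • b) - exp ((n : ℝ)⁻¹ • (a + b))‖) := by
  let : NormedAlgebra ℚ 𝔸 := NormedAlgebra.restrictScalars ℚ ℝ 𝔸
  set t := (n : ℝ)⁻¹
  have ht : 0 ≤ t := by positivity
  have hnt : (n : ℝ) * t = 1 := mul_inv_cancel₀ (by exact_mod_cast hn)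
  set M := Real.exp (t * (‖a‖ + ‖b‖))
  have hX : ‖exp (t • a) * exp (t • b)‖ ≤ M := by
    calc ‖exp (t • a) * exp (t • b)‖ ≤ Real.exp (t * ‖a‖) * Real.exp (t * ‖b‖) :=
          (norm_mul_le _ _).trans (mul_le_mul (norm_exp_smul_le ht a) (norm_exp_smul_le ht b)
            (norm_nonneg _) (Real.exp_pos _).le)
      _ = M := by rw [← Real.exp_add, ← mul_add]
  have hY : ‖exp (t • (a + b))‖ ≤ M :=
    (norm_exp_smul_le ht _).trans (Real.exp_le_exp.2 (by gcongr; exact norm_add_le a b))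
  have hYn : exp (t • (a + b)) ^ n = exp (a + b) := by
    rw [← exp_nsmul, ← Nat.cast_smul_eq_nsmul ℝ, smul_smul, hnt, one_smul]
  have hMn : M ^ (n - 1) ≤ Real.exp (‖a‖ + ‖b‖) := by
    calc M ^ (n - 1) ≤ M ^ n := pow_le_pow_right₀ (Real.one_le_exp (by positivity)) (n.sub_le 1)
      _ = Real.exp (‖a‖ + ‖b‖) := by rw [← Real.exp_nat_mul, ← mul_assoc, hnt, one_mul]
  calc ‖(exp (t • a) * exp (t • b)) ^ n - exp (a + b)‖
      ≤ n * M ^ (n - 1) * ‖exp (t • a) * exp (t • b) - exp (t • (a + b))‖ := by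
        rw [← hYn]; exact norm_pow_sub_pow_le hX hY n
    _ ≤ _ := by rw [mul_left_comm, ← mul_assoc]; gcongr

/-- The Lie product formula. -/
theorem tendsto_exp_mul_exp_pow [NormOneClass 𝔸] (a b : 𝔸) :
    Tendsto (fun n : ℕ => (exp ((n : ℝ)⁻¹ • a) * exp ((n : ℝ)⁻¹ • b)) ^ n) atTop
      (𝓝 (exp (a + b))) := by
  set D : ℝ → 𝔸 := fun t => exp (t • a) * exp (t • b) - exp (t • (a + b))
  have hinv : Tendsto (fun n : ℕ => (n : ℝ)⁻¹) atTop (𝓝 0) := tendsto_inv_atTop_nhds_zero_nat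
  have hD : Tendsto (fun n : ℕ => (n : ℝ) • D (n : ℝ)⁻¹) atTop (𝓝 0) := by
    refine IsBigO.trans_tendsto ?_ hinv
    refine ((isBigO_refl (fun n : ℕ => (n : ℝ)) atTop).smul
      ((isBigO_exp_smul_mul_exp_smul_sub a b).comp_tendsto hinv)).congr_right fun n => ?_
    rcases eq_or_ne (n : ℝ) 0 with hn | hn
    · simp [hn]
    · simp only [Function.comp_def, smul_eq_mul]
      field_simp
  rw [← tendsto_sub_nhds_zero_iff]
  refine squeeze_zero_norm' ?_ (by simpa using hD.norm.const_mul (Real.exp (‖a‖ + ‖b‖)))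
  filter_upwards [eventually_ne_atTop 0] with n hn
  rw [norm_smul, Real.norm_natCast]
  exact norm_exp_mul_exp_pow_sub_exp_le a b hn

/-- For closed `S` this is a vector space because of the Lie product formula. -/
def Submonoid.oneParamSubmodule [NormOneClass 𝔸] (S : Submonoid 𝔸) (hS : IsClosed (S : Set 𝔸)) :
    Submodule ℝ 𝔸 where
  carrier := {a | ∀ t : ℝ, exp (t • a) ∈ S}
  zero_mem' t := by simp
  add_mem' {a b} ha hb t := by
    rw [smul_add]
    refine hS.mem_of_tendsto (tendsto_exp_mul_exp_pow (t • a) (t • b))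
      (Eventually.of_forall fun n => pow_mem (mul_mem ?_ ?_) n)
    · simpa only [smul_smul] using ha _
    · simpa only [smul_smul] using hb _
  smul_mem' c a ha t := by simpa only [smul_smul] using ha (t * c)

def expSubgroup (X : Set 𝔸) : Subgroup 𝔸ˣ :=
  Subgroup.closure {u | ∃ x ∈ X, ∃ t : ℝ, (u : 𝔸) = exp (t • x)}

theorem image_expSubgroup_subset_closure [NormOneClass 𝔸] {X Y : Set 𝔸}
    (hXY : X ⊆ Submodule.span ℝ Y) :
    Units.val '' (expSubgroup X : Set 𝔸ˣ) ⊆ closure (Units.val '' (expSubgroup Y : Set 𝔸ˣ)) := by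
  let : NormedAlgebra ℚ 𝔸 := NormedAlgebra.restrictScalars ℚ ℝ 𝔸
  set S : Submonoid 𝔸 := ((expSubgroup Y).toSubmonoid.map (Units.coeHom 𝔸)).topologicalClosure
  have hS : (S : Set 𝔸) = closure (Units.val '' (expSubgroup Y : Set 𝔸ˣ)) := rfl
  have hY : Y ⊆ S.oneParamSubmodule (hS ▸ isClosed_closure) := fun y hy t =>
    subset_closure ⟨(isUnit_exp (t • y)).unit, Subgroup.subset_closure ⟨y, hy, t, rfl⟩, rfl⟩
  have hX : expSubgroup X ≤ (expSubgroup Y).topologicalClosure := by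
    refine (Subgroup.closure_le _).2 ?_
    rintro u ⟨x, hx, t, hu⟩
    rw [Subgroup.topologicalClosure_coe,
      Units.isOpenEmbedding_val.isEmbedding.closure_eq_preimage_closure_image, Set.mem_preimage,
      ← hS, hu]
    exact Submodule.span_le.2 hY (hXY hx) t
  exact (Set.image_mono hX).trans (image_closure_subset_closure_image Units.continuous_val)

end BanachAlgebra

section StrongClosure

variable {H : Type*} [NormedAddCommGroup H] [InnerProductSpace ℂ H]

theorem strongClosure_subset_strongClosure {S T : Set (H →L[ℂ] H)} (hST : S ⊆ closure T) :
    strongClosure S ⊆ strongClosure T := by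
  intro A hA ε hε M ψ
  obtain ⟨W, hWS, hW⟩ := hA (ε / 2) (half_pos hε) M ψ
  have hcont : Continuous fun V : H →L[ℂ] H => fun j => V (ψ j) := by fun_prop
  obtain ⟨_, ⟨V, hVT, rfl⟩, hV⟩ := Metric.mem_closure_iff.1
    (map_mem_closure hcont (hST hWS) (Set.mapsTo_image _ T)) (ε / 2) (half_pos hε)
  refine ⟨V, hVT, fun j => ?_⟩
  have hVW := (dist_pi_lt_iff (half_pos hε)).1 hV j
  rw [dist_eq_norm'] at hVW
  calc ‖V (ψ j) - A (ψ j)‖ ≤ ‖V (ψ j) - W (ψ j)‖ + ‖W (ψ j) - A (ψ j)‖ :=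
        norm_sub_le_norm_sub_add_norm_sub _ _ _
    _ < ε / 2 + ε / 2 := add_lt_add hVW (hW j)
    _ = ε := add_halves ε

theorem strongClosure_image_expSubgroup_eq [CompleteSpace H] {X Y : Set (H →L[ℂ] H)}
    (hXY : Submodule.span ℝ X = Submodule.span ℝ Y) :
    strongClosure (Units.val '' (expSubgroup X : Set (H →L[ℂ] H)ˣ)) =
      strongClosure (Units.val '' (expSubgroup Y : Set (H →L[ℂ] H)ˣ)) := by
  rcases subsingleton_or_nontrivial H with hH | hH
  · rw [(Set.image_nonempty.2 ⟨1, one_mem _⟩).eq_univ,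
      (Set.image_nonempty.2 ⟨1, one_mem _⟩).eq_univ]
  exact (strongClosure_subset_strongClosure (image_expSubgroup_subset_closure
      fun x hx => hXY.le (Submodule.subset_span hx))).antisymm
    (strongClosure_subset_strongClosure (image_expSubgroup_subset_closure
      fun y hy => hXY.ge (Submodule.subset_span hy)))

end StrongClosure

theorem dynamical_group_eq_restricted_dynamical_group_general
    {H : Type*} [NormedAddCommGroup H] [InnerProductSpace ℂ H] [CompleteSpace H]
    (H0 : H →L[ℂ] H)
    (N : ℕ) (Hc : Fin N → (H →L[ℂ] H)) :
    strongClosure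
      (((↑) : (H →L[ℂ] H)ˣ → (H →L[ℂ] H)) ''
        (Subgroup.closure {u : (H →L[ℂ] H)ˣ | ∃ (t : ℝ) (y : Fin N → ℝ),
            (u : H →L[ℂ] H) = NormedSpace.exp
              (Complex.I • ((t : ℂ) • (H0 + ∑ j : Fin N, (y j : ℂ) • Hc j)))} :
          Set (H →L[ℂ] H)ˣ)) =
    strongClosure
      (((↑) : (H →L[ℂ] H)ˣ → (H →L[ℂ] H)) ''
        (Subgroup.closure {u : (H →L[ℂ] H)ˣ | ∃ t : ℝ,
            (u : H →L[ℂ] H) = NormedSpace.exp (Complex.I • ((t : ℂ) • H0)) ∨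
            ∃ j : Fin N,
              (u : H →L[ℂ] H) = NormedSpace.exp (Complex.I • ((t : ℂ) • Hc j))} :
          Set (H →L[ℂ] H)ˣ)) := by
  have hsmul (t : ℝ) (z : H →L[ℂ] H) : Complex.I • ((t : ℂ) • z) = t • Complex.I • z := by
    rw [smul_comm, Complex.coe_smul]
  have hA : Subgroup.closure {u : (H →L[ℂ] H)ˣ | ∃ (t : ℝ) (y : Fin N → ℝ),
      (u : H →L[ℂ] H) = exp (Complex.I • ((t : ℂ) • (H0 + ∑ j : Fin N, (y j : ℂ) • Hc j)))} =
      expSubgroup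
        (Set.range fun y : Fin N → ℝ => Complex.I • H0 + ∑ j, y j • Complex.I • Hc j) := by
    simp only [expSubgroup, hsmul, smul_add, Finset.smul_sum, Set.exists_range_iff]
    congr 1; ext u
    exact exists_comm
  have hB : Subgroup.closure {u : (H →L[ℂ] H)ˣ | ∃ t : ℝ,
      (u : H →L[ℂ] H) = exp (Complex.I • ((t : ℂ) • H0)) ∨
      ∃ j : Fin N, (u : H →L[ℂ] H) = exp (Complex.I • ((t : ℂ) • Hc j))} =
      expSubgroup (insert (Complex.I • H0) (Set.range fun j => Complex.I • Hc j)) := by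
    simp only [expSubgroup, hsmul, Set.exists_mem_insert, Set.exists_range_iff, exists_or]
    congr 1; ext u
    exact or_congr_right exists_comm
  rw [hA, hB]
  exact strongClosure_image_expSubgroup_eq (span_range_add_sum_smul _ _)

/-- Proposition 1 of the paper (bounded case): the dynamical group, i.e. the strong
closure of the subgroup of invertible bounded operators generated by all
`exp (i t H(y))` with `H(y) = H0 + ∑ y_j H_j`, equals the restricted dynamical group,
i.e. the strong closure of the subgroup generated by the `exp (i t H_j)`, `j = 0, …, N`. -/
theorem dynamical_group_eq_restricted_dynamical_group
    {H : Type*} [NormedAddCommGroup H] [InnerProductSpace ℂ H] [CompleteSpace H]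
    (H0 : H →L[ℂ] H)
    (hH0sa : ∀ ψ χ : H, ⟪H0 ψ, χ⟫_ℂ = ⟪ψ, H0 χ⟫_ℂ)
    (N : ℕ) (Hc : Fin N → (H →L[ℂ] H))
    (hHcsa : ∀ j, ∀ ψ χ : H, ⟪Hc j ψ, χ⟫_ℂ = ⟪ψ, Hc j χ⟫_ℂ) :
    strongClosure
      (((↑) : (H →L[ℂ] H)ˣ → (H →L[ℂ] H)) ''
        (Subgroup.closure {u : (H →L[ℂ] H)ˣ | ∃ (t : ℝ) (y : Fin N → ℝ),
            (u : H →L[ℂ] H) = NormedSpace.exp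
              (Complex.I • ((t : ℂ) • (H0 + ∑ j : Fin N, (y j : ℂ) • Hc j)))} :
          Set (H →L[ℂ] H)ˣ)) =
    strongClosure
      (((↑) : (H →L[ℂ] H)ˣ → (H →L[ℂ] H)) ''
        (Subgroup.closure {u : (H →L[ℂ] H)ˣ | ∃ t : ℝ,
            (u : H →L[ℂ] H) = NormedSpace.exp (Complex.I • ((t : ℂ) • H0)) ∨
            ∃ j : Fin N,
              (u : H →L[ℂ] H) = NormedSpace.exp (Complex.I • ((t : ℂ) • Hc j))} :
          Set (H →L[ℂ] H)ˣ)) :=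
  dynamical_group_eq_restricted_dynamical_group_general H0 N Hc
end

section
/- (Recurrence, sequence form) Let H be a complex Hilbert space with Hilbert basis (φ_n)_{n∈ℕ} and let (λ_n)_{n∈ℕ} be an arbitrary sequence of real numbers. Then for every t_- ≤ 0, every ε > 0, and every finite family ψ_1, …, ψ_M ∈ H, there exists t_+ > 0 such that Σ'_n |exp(i t_+ λ_n) − exp(i t_- λ_n)|² · ‖⟪φ_n, ψ_j⟫‖² < ε² for all j = 1, …, M. (This expresses recurrence of the unitary one-parameter group that is diagonal in the basis (φ_n) with eigenvalue sequence (λ_n), covering unbounded generators with pure point spectrum.) -/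
/-!
The orbit `k ↦ (e^{i k λ_n})_n` of the compact group `ℕ → Circle` has a convergent subsequence
`k_m`, so the quotients `e^{i (k_{2m} - k_m) λ_n}` tend to `1` for every `n` along times tending
to infinity. Since `‖e^{i (t + s) λ} - e^{i t λ}‖ = ‖e^{i s λ} - 1‖ ≤ 2` and the weights
`‖⟪φ_n, ψ_j⟫‖²` are summable (Bessel), dominated convergence sends each series to `0`.
-/

open scoped InnerProductSpace
open Filter Topology Complex

theorem exists_tendsto_atTop_tendsto_pow_nhds_one {G : Type*} [Group G] [TopologicalSpace G]
    [IsTopologicalGroup G] [SeqCompactSpace G] (g : G) :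
    ∃ k : ℕ → ℕ, Tendsto k atTop atTop ∧ Tendsto (fun m => g ^ k m) atTop (𝓝 1) := by
  obtain ⟨h, φ, hφ, hlim⟩ := SeqCompactSpace.tendsto_subseq (fun n => g ^ n)
  have hdouble : Tendsto (fun m : ℕ => m + m) atTop atTop :=
    tendsto_atTop_mono (fun m => Nat.le_add_left m m) tendsto_id
  refine ⟨fun m => φ (m + m) - φ m, ?_, ?_⟩
  · refine tendsto_atTop_mono (fun m => ?_) tendsto_id
    have := hφ.add_le_nat m m
    simp only [id]
    omega
  · have := (hlim.comp hdouble).mul hlim.inv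
    rw [mul_inv_cancel] at this
    refine this.congr fun m => ?_
    simp [pow_sub g (hφ.monotone (Nat.le_add_left m m))]

theorem exists_tendsto_atTop_tendsto_exp_I_mul_nhds_one {ι : Type*} [Countable ι]
    (lam : ι → ℝ) :
    ∃ s : ℕ → ℝ, Tendsto s atTop atTop ∧
      ∀ i, Tendsto (fun m => exp (I * s m * lam i)) atTop (𝓝 1) := by
  obtain ⟨k, hk, hpow⟩ := exists_tendsto_atTop_tendsto_pow_nhds_one (fun i => Circle.exp (lam i))
  refine ⟨fun m => k m, tendsto_natCast_atTop_atTop.comp hk, fun i => ?_⟩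
  have hi : Tendsto (fun m => ((Circle.exp (lam i) ^ k m : Circle) : ℂ)) atTop (𝓝 1) :=
    (continuous_subtype_val.tendsto 1).comp (tendsto_pi_nhds.1 hpow i)
  refine hi.congr fun m => ?_
  rw [← Circle.exp_natCast_mul, Circle.coe_exp]
  push_cast
  ring_nf

theorem norm_exp_I_mul_add_sub (t s x : ℝ) :
    ‖exp (I * ↑(t + s) * x) - exp (I * t * x)‖ = ‖exp (I * s * x) - 1‖ := by
  have hfactor : exp (I * ↑(t + s) * x) - exp (I * t * x)
      = exp (↑(t * x) * I) * (exp (I * s * x) - 1) := by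
    rw [mul_sub, ← exp_add, mul_one]
    push_cast
    ring_nf
  rw [hfactor, norm_mul, norm_exp_ofReal_mul_I, one_mul]

theorem norm_exp_I_mul_sub_one_le_two (x : ℝ) : ‖exp (I * x) - 1‖ ≤ 2 := by
  calc ‖exp (I * x) - 1‖ ≤ ‖exp (x * I)‖ + ‖(1 : ℂ)‖ := by rw [mul_comm]; exact norm_sub_le _ _
    _ = 2 := by rw [norm_exp_ofReal_mul_I, norm_one]; norm_num

theorem tendsto_tsum_norm_exp_I_mul_add_sub_sq_mul {ι α : Type*} {l : Filter α}
    (lam : ι → ℝ) {c : ι → ℝ} (hc : Summable c) {s : α → ℝ}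
    (hs : ∀ i, Tendsto (fun m => exp (I * s m * lam i)) l (𝓝 1)) (t : ℝ) :
    Tendsto (fun m => ∑' i, ‖exp (I * ↑(t + s m) * lam i) - exp (I * t * lam i)‖ ^ 2 * c i)
      l (𝓝 0) := by
  simp only [norm_exp_I_mul_add_sub]
  have hlim : ∀ i, Tendsto (fun m => ‖exp (I * s m * lam i) - 1‖ ^ 2 * c i) l (𝓝 0) := by
    intro i
    simpa using (((hs i).sub_const 1).norm.pow 2).mul_const (c i)
  have hbound : ∀ m i, ‖‖exp (I * s m * lam i) - 1‖ ^ 2 * c i‖ ≤ 4 * |c i| := by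
    intro m i
    have hle : ‖exp (I * s m * lam i) - 1‖ ≤ 2 := by
      simpa only [ofReal_mul, mul_assoc] using norm_exp_I_mul_sub_one_le_two (s m * lam i)
    rw [norm_mul, norm_pow, norm_norm, Real.norm_eq_abs]
    gcongr
    calc ‖exp (I * s m * lam i) - 1‖ ^ 2 ≤ 2 ^ 2 := by gcongr
      _ = 4 := by norm_num
  simpa using tendsto_tsum_of_dominated_convergence (hc.abs.mul_left 4) hlim
    (Eventually.of_forall hbound)

theorem recurrence_sequence_form_general
    {H : Type*} [NormedAddCommGroup H] [InnerProductSpace ℂ H]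
    (φ : HilbertBasis ℕ ℂ H) (lam : ℕ → ℝ)
    (tminus : ℝ)
    (ε : ℝ) (hε : 0 < ε) (M : ℕ) (ψ : Fin M → H) :
    ∃ tplus : ℝ, 0 < tplus ∧ ∀ j : Fin M,
      ∑' n : ℕ, ‖Complex.exp (Complex.I * tplus * lam n)
          - Complex.exp (Complex.I * tminus * lam n)‖ ^ 2
        * ‖⟪(φ n : H), ψ j⟫_ℂ‖ ^ 2 < ε ^ 2 := by
  obtain ⟨s, hs_top, hs⟩ := exists_tendsto_atTop_tendsto_exp_I_mul_nhds_one lam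
  have hsmall : ∀ᶠ m in atTop, 0 < tminus + s m ∧ ∀ j : Fin M,
      ∑' n, ‖exp (I * ↑(tminus + s m) * lam n) - exp (I * tminus * lam n)‖ ^ 2
        * ‖⟪(φ n : H), ψ j⟫_ℂ‖ ^ 2 < ε ^ 2 := by
    refine ((tendsto_atTop_add_const_left _ tminus hs_top).eventually_gt_atTop 0).and
      (eventually_all.2 fun j => ?_)
    exact (tendsto_tsum_norm_exp_I_mul_add_sub_sq_mul lam
      (φ.orthonormal.inner_products_summable (ψ j)) hs tminus).eventually
      (gt_mem_nhds (pow_pos hε 2))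
  obtain ⟨m, hpos, hlt⟩ := hsmall.exists
  exact ⟨tminus + s m, hpos, hlt⟩

/-- Recurrence, sequence form: for an arbitrary real sequence `lam` (the eigenvalue
sequence of a possibly unbounded generator with pure point spectrum, diagonal in the
Hilbert basis `φ`), the diagonal unitary one-parameter group recurs: its past values
are approximated in the strong sense at positive times. -/
theorem recurrence_sequence_form
    {H : Type*} [NormedAddCommGroup H] [InnerProductSpace ℂ H] [CompleteSpace H]
    (φ : HilbertBasis ℕ ℂ H) (lam : ℕ → ℝ)
    (tminus : ℝ) (htminus : tminus ≤ 0)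
    (ε : ℝ) (hε : 0 < ε) (M : ℕ) (ψ : Fin M → H) :
    ∃ tplus : ℝ, 0 < tplus ∧ ∀ j : Fin M,
      ∑' n : ℕ, ‖Complex.exp (Complex.I * tplus * lam n)
          - Complex.exp (Complex.I * tminus * lam n)‖ ^ 2
        * ‖⟪(φ n : H), ψ j⟫_ℂ‖ ^ 2 < ε ^ 2 :=
  recurrence_sequence_form_general φ lam tminus ε hε M ψ
end

section
/- Let K be a self-adjoint linear operator on a finite-dimensional complex inner product space V. Then for every t_- < 0 and every ε > 0 there exists t_+ > 0 such that ‖exp(i t_- K) − exp(i t_+ K)‖ < ε in the operator norm. -/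
/-!
`t ↦ exp (i t K)` is a one-parameter group of unitaries. In finite dimensions the unitaries lie
in a compact ball, so among the integer times there are `n` and `m ≥ n + N` with `U n` and `U m`
`ε`-close; multiplying on the left by the unitary `U (t - n)`, an isometry, shows that `U t` and
`U (t + m - n)` are `ε`-close, and `t + m - n` is as large as we like.
-/

open scoped InnerProductSpace
open selfAdjoint

theorem IsCompact.exists_add_le_dist_lt {X : Type*} [PseudoMetricSpace X] {s : Set X}
    (hs : IsCompact s) {f : ℕ → X} (hf : ∀ n, f n ∈ s) {ε : ℝ} (hε : 0 < ε) (N : ℕ) :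
    ∃ n m, n + N ≤ m ∧ dist (f n) (f m) < ε := by
  obtain ⟨x, -, φ, hφ, hconv⟩ := hs.tendsto_subseq hf
  obtain ⟨k, hk⟩ := Metric.cauchySeq_iff'.1 hconv.cauchySeq ε hε
  refine ⟨φ k, φ (N + k), add_comm N (φ k) ▸ hφ.add_le_nat N k, ?_⟩
  rw [dist_comm]
  exact hk (N + k) (Nat.le_add_left k N)

theorem CStarRing.norm_coe_unitary_eq_norm_one {A : Type*} [NormedRing A] [StarRing A]
    [CStarRing A] (u : unitary A) : ‖(u : A)‖ = ‖(1 : A)‖ := by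
  simpa using CStarRing.norm_mul_coe_unitary (1 : A) u

section CStarAlgebra

variable {A : Type*} [NormedRing A] [NormedAlgebra ℂ A] [StarRing A] [CStarRing A]
  [CompleteSpace A] [StarModule ℂ A]

theorem selfAdjoint.expUnitary_add_smul (a : selfAdjoint A) (s t : ℝ) :
    expUnitary ((s + t) • a) = expUnitary (s • a) * expUnitary (t • a) := by
  rw [add_smul]
  exact (((Commute.refl (a : A)).smul_left s).smul_right t).expUnitary_add

theorem selfAdjoint.exists_lt_norm_expUnitary_sub_lt [ProperSpace A] (a : selfAdjoint A)
    (t L : ℝ) {ε : ℝ} (hε : 0 < ε) :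
    ∃ s, L < s ∧ ‖(expUnitary (t • a) - expUnitary (s • a) : A)‖ < ε := by
  set f : ℕ → A := fun n ↦ expUnitary ((n : ℝ) • a)
  have hf : ∀ n, f n ∈ Metric.closedBall 0 ‖(1 : A)‖ := fun n ↦
    mem_closedBall_zero_iff.2 (CStarRing.norm_coe_unitary_eq_norm_one _).le
  obtain ⟨n, m, hnm, hdist⟩ :=
    (isCompact_closedBall 0 _).exists_add_le_dist_lt hf hε (⌈L - t⌉₊ + 1)
  have hshift (k : ℕ) :
      expUnitary ((t - n + k) • a) = expUnitary ((t - n) • a) * expUnitary ((k : ℝ) • a) :=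
    expUnitary_add_smul a _ _
  refine ⟨t - n + m, ?_, ?_⟩
  · have : (n : ℝ) + ⌈L - t⌉₊ + 1 ≤ m := by exact_mod_cast hnm
    linarith [Nat.le_ceil (L - t)]
  · have hshift_n := hshift n
    rw [sub_add_cancel] at hshift_n
    rw [hshift_n, hshift m, Submonoid.coe_mul, Submonoid.coe_mul, ← mul_sub,
      CStarRing.norm_coe_unitary_mul, ← dist_eq_norm]
    exact hdist

end CStarAlgebra

theorem finite_dim_recurrence_general
    {V : Type*} [NormedAddCommGroup V] [InnerProductSpace ℂ V] [FiniteDimensional ℂ V]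
    (K : V →L[ℂ] V)
    (hKsa : ∀ ψ χ : V, ⟪K ψ, χ⟫_ℂ = ⟪ψ, K χ⟫_ℂ)
    (tminus : ℝ) (ε : ℝ) (hε : 0 < ε) :
    ∃ tplus : ℝ, 0 < tplus ∧
      ‖NormedSpace.exp (Complex.I • ((tminus : ℂ) • K))
        - NormedSpace.exp (Complex.I • ((tplus : ℂ) • K))‖ < ε := by
  let a : selfAdjoint (V →L[ℂ] V) :=
    ⟨K, ContinuousLinearMap.isSelfAdjoint_iff_isSymmetric.2 hKsa⟩
  have hexp (t : ℝ) : NormedSpace.exp (Complex.I • ((t : ℂ) • K)) = expUnitary (t • a) := by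
    simp [a, Complex.coe_smul]
  simpa only [hexp] using selfAdjoint.exists_lt_norm_expUnitary_sub_lt a tminus 0 hε

/-- Recurrence in finite dimensions, Eq. (8) of the paper: a one-parameter unitary group
with bounded self-adjoint generator on a finite-dimensional complex inner product space
revisits its own past approximately in operator norm. -/
theorem finite_dim_recurrence
    {V : Type*} [NormedAddCommGroup V] [InnerProductSpace ℂ V] [FiniteDimensional ℂ V]
    (K : V →L[ℂ] V)
    (hKsa : ∀ ψ χ : V, ⟪K ψ, χ⟫_ℂ = ⟪ψ, K χ⟫_ℂ)
    (tminus : ℝ) (htminus : tminus < 0) (ε : ℝ) (hε : 0 < ε) :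
    ∃ tplus : ℝ, 0 < tplus ∧
      ‖NormedSpace.exp (Complex.I • ((tminus : ℂ) • K))
        - NormedSpace.exp (Complex.I • ((tplus : ℂ) • K))‖ < ε :=
  finite_dim_recurrence_general K hKsa tminus ε hε
end

section
/- (Strong continuity of the exponential map on self-adjoint operators) Let H be a complex Hilbert space, F a filter on an index type ι, and (A_i)_{i∈ι} a family of bounded self-adjoint operators on H converging strongly along F to a bounded self-adjoint operator A, i.e. for every ψ ∈ H, A_i ψ → A ψ along F. Then exp(iA_i) converges strongly to exp(iA) along F: for every ψ ∈ H, exp(iA_i) ψ → exp(iA) ψ along F. (No uniform bound on ‖A_i‖ is assumed.) -/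
/-!
Let `R = (i - A)⁻¹` denote resolvents at `i`. For self-adjoint `A` they satisfy `‖R‖ ≤ 1`, so the
second resolvent identity `Rᵢ - R₀ = Rᵢ (Aᵢ - A₀) R₀` turns strong convergence of the `Aᵢ` into
strong convergence of the resolvents, with no bound on `‖Aᵢ‖` needed. Writing `ψ = R₀ φ`,
`exp(iAᵢ)ψ - exp(iA₀)ψ = exp(iAᵢ)(R₀ - Rᵢ)φ + (exp(iAᵢ)Rᵢ - Rᵢ exp(iA₀))φ + (Rᵢ - R₀)exp(iA₀)φ`.
The outer terms tend to `0` since `exp(iAᵢ)` is unitary. By Duhamel's formula the middle term is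
`∫₀¹ exp(i(1-t)Aᵢ) (-i)(Rᵢ - R₀)(i - A₀) exp(itA₀)φ dt`, and its integrand tends to `0` uniformly
in `t`: the `Rᵢ - R₀` are uniformly bounded, so they converge uniformly on the compact curve
`t ↦ (i - A₀) exp(itA₀)φ`.
-/

open scoped InnerProductSpace
open Filter Topology

theorem hasDerivAt_exp_mul_mul_exp {𝔸 : Type*} [NormedRing 𝔸] [NormedAlgebra ℝ 𝔸] [CompleteSpace 𝔸]
    (a b c : 𝔸) (t : ℝ) :
    HasDerivAt (fun s : ℝ => NormedSpace.exp ((1 - s) • a) * c * NormedSpace.exp (s • b))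
      (NormedSpace.exp ((1 - t) • a) * (c * b - a * c) * NormedSpace.exp (t • b)) t := by
  have hleft : HasDerivAt (fun s : ℝ => NormedSpace.exp ((1 - s) • a))
      (-(NormedSpace.exp ((1 - t) • a) * a)) t := by
    simpa [Function.comp_def] using
      (hasDerivAt_exp_smul_const a (1 - t)).scomp t ((hasDerivAt_id t).const_sub 1)
  refine ((hleft.mul_const c).mul (hasDerivAt_exp_smul_const' b t)).congr_deriv ?_
  noncomm_ring

theorem tendstoUniformlyOn_of_tendsto_of_norm_le {𝕜 E F ι : Type*} [NontriviallyNormedField 𝕜]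
    [SeminormedAddCommGroup E] [NormedSpace 𝕜 E] [SeminormedAddCommGroup F] [NormedSpace 𝕜 F]
    {l : Filter ι} {T : ι → E →L[𝕜] F} {f : E → F} {C : ℝ} (hT : ∀ i, ‖T i‖ ≤ C)
    (h : ∀ x, Tendsto (fun i => T i x) l (𝓝 (f x))) {K : Set E} (hK : IsCompact K) :
    TendstoUniformlyOn (fun i => ⇑(T i)) f l K := by
  have hequi : Equicontinuous (fun i => ⇑(T i)) :=
    ((NormedSpace.equicontinuous_TFAE T).out 5 1).mp (⟨C, hT⟩ : ∃ C, ∀ i, ‖T i‖ ≤ C)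
  have hunif := (EquicontinuousOn.tendsto_uniformOnFun_iff_pi (𝔖 := {K | IsCompact K})
    (fun _ hK => hK) (Set.sUnion_eq_univ_iff.2 fun x => ⟨{x}, isCompact_singleton, rfl⟩)
    (fun K _ => hequi.equicontinuousOn K) l f).2 (tendsto_pi_nhds.2 h)
  exact UniformOnFun.tendsto_iff_tendstoUniformlyOn.1 hunif K hK

section Resolvent

variable {R A : Type*} [CommRing R] [Ring A] [Algebra R A] {a b : A} {r : R}

theorem algebraMap_sub_mul_resolvent (h : r ∈ resolventSet R a) :
    (algebraMap R A r - a) * resolvent a r = 1 := by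
  rw [spectrum.resolvent_eq h]; exact h.mul_val_inv

theorem resolvent_mul_algebraMap_sub (h : r ∈ resolventSet R a) :
    resolvent a r * (algebraMap R A r - a) = 1 := by
  rw [spectrum.resolvent_eq h]; exact h.val_inv_mul

theorem mul_resolvent_sub_resolvent_mul (ha : r ∈ resolventSet R a) (hb : r ∈ resolventSet R b) :
    a * resolvent a r - resolvent a r * b
      = (resolvent a r - resolvent b r) * (algebraMap R A r - b) := by
  have ha' : a * resolvent a r = algebraMap R A r * resolvent a r - 1 := by
    rw [← algebraMap_sub_mul_resolvent ha]; noncomm_ring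
  rw [sub_mul, resolvent_mul_algebraMap_sub hb, mul_sub, ha', ← Algebra.commutes]
  abel

theorem Commute.resolvent_left (h : Commute a b) (r : R) : Commute (resolvent a r) b := by
  by_cases hr : r ∈ resolventSet R a
  · rw [spectrum.resolvent_eq hr]
    exact Commute.units_inv_left ((Algebra.commute_algebraMap_left r b).sub_left h)
  · rw [spectrum.resolvent_zero_of_mem_spectrum hr]
    exact Commute.zero_left b

end Resolvent

section Hilbert

variable {H : Type*} [NormedAddCommGroup H] [InnerProductSpace ℂ H] [CompleteSpace H]
  {A B : H →L[ℂ] H}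

theorem IsSelfAdjoint.norm_exp_I_smul_apply (hA : IsSelfAdjoint A) (x : H) :
    ‖NormedSpace.exp (Complex.I • A) x‖ = ‖x‖ :=
  ContinuousLinearMap.norm_map_of_mem_unitary
    (selfAdjoint.expUnitary (⟨A, hA⟩ : selfAdjoint (H →L[ℂ] H))).2 x

theorem IsSelfAdjoint.I_mem_resolventSet (hA : IsSelfAdjoint A) :
    Complex.I ∈ resolventSet ℂ A := by
  by_contra h
  simpa [Complex.ext_iff] using hA.mem_spectrum_eq_re h

theorem IsSelfAdjoint.norm_le_norm_I_smul_sub_apply (hA : IsSelfAdjoint A) (x : H) :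
    ‖x‖ ≤ ‖Complex.I • x - A x‖ := by
  rcases eq_or_ne x 0 with rfl | hx
  · simp
  have him : (⟪x, Complex.I • x - A x⟫_ℂ).im = ‖x‖ ^ 2 := by
    have hreal : (⟪x, A x⟫_ℂ).im = 0 := hA.isSymmetric.im_inner_self_apply x
    rw [inner_sub_right, inner_smul_right, inner_self_eq_norm_sq_to_K, Complex.sub_im, hreal]
    simp [← Complex.ofReal_pow]
  have hsq : ‖x‖ * ‖x‖ ≤ ‖x‖ * ‖Complex.I • x - A x‖ := by
    rw [← sq, ← him]
    exact (Complex.im_le_norm _).trans (norm_inner_le_norm _ _)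
  exact le_of_mul_le_mul_left hsq (norm_pos_iff.2 hx)

theorem IsSelfAdjoint.norm_resolvent_I_apply_le (hA : IsSelfAdjoint A) (x : H) :
    ‖resolvent A Complex.I x‖ ≤ ‖x‖ := by
  have h := hA.norm_le_norm_I_smul_sub_apply (resolvent A Complex.I x)
  have hinv : Complex.I • resolvent A Complex.I x - A (resolvent A Complex.I x) = x := by
    simpa [Algebra.algebraMap_eq_smul_one] using
      DFunLike.congr_fun (algebraMap_sub_mul_resolvent hA.I_mem_resolventSet) x
  rwa [hinv] at h

theorem IsSelfAdjoint.norm_resolvent_I_le (hA : IsSelfAdjoint A) : ‖resolvent A Complex.I‖ ≤ 1 :=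
  ContinuousLinearMap.opNorm_le_bound _ zero_le_one fun x => by
    simpa using hA.norm_resolvent_I_apply_le x

theorem IsSelfAdjoint.tendsto_resolvent_I_apply {ι : Type*} {l : Filter ι} {A : ι → H →L[ℂ] H}
    {A₀ : H →L[ℂ] H} (hA : ∀ i, IsSelfAdjoint (A i)) (hA₀ : IsSelfAdjoint A₀)
    (h : ∀ x, Tendsto (fun i => A i x) l (𝓝 (A₀ x))) (x : H) :
    Tendsto (fun i => resolvent (A i) Complex.I x) l (𝓝 (resolvent A₀ Complex.I x)) := by
  set y := resolvent A₀ Complex.I x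
  have hbound : ∀ i, ‖resolvent (A i) Complex.I x - y‖ ≤ ‖A i y - A₀ y‖ := fun i => by
    rw [← sub_apply, spectrum.resolvent_sub_resolvent
      (hA i).I_mem_resolventSet hA₀.I_mem_resolventSet]
    exact (hA i).norm_resolvent_I_apply_le _
  exact tendsto_iff_norm_sub_tendsto_zero.2 <|
    squeeze_zero (fun _ => norm_nonneg _) hbound (tendsto_iff_norm_sub_tendsto_zero.1 (h y))

theorem IsSelfAdjoint.norm_exp_resolvent_sub_resolvent_exp_le
    (hA : IsSelfAdjoint A) (hB : IsSelfAdjoint B) {x : H} {C : ℝ}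
    (hC : ∀ t ∈ Set.Icc (0 : ℝ) 1, ‖(resolvent B Complex.I - resolvent A Complex.I)
      ((algebraMap ℂ _ Complex.I - A) (NormedSpace.exp (t • (Complex.I • A)) x))‖ ≤ C) :
    ‖NormedSpace.exp (Complex.I • B) (resolvent B Complex.I x)
      - resolvent B Complex.I (NormedSpace.exp (Complex.I • A) x)‖ ≤ C := by
  set RA := resolvent A Complex.I
  set RB := resolvent B Complex.I
  set f : ℝ → H := fun s => (NormedSpace.exp ((1 - s) • (Complex.I • B)) * RB *
    NormedSpace.exp (s • (Complex.I • A))) x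
  have hf : ∀ t : ℝ, HasDerivAt f ((NormedSpace.exp ((1 - t) • (Complex.I • B)) *
      (RB * (Complex.I • A) - (Complex.I • B) * RB) * NormedSpace.exp (t • (Complex.I • A))) x) t :=
    fun t => ((ContinuousLinearMap.apply ℂ H x).restrictScalars ℝ).hasFDerivAt.comp_hasDerivAt t
        (hasDerivAt_exp_mul_mul_exp _ _ RB t)
  have hcomm : RB * (Complex.I • A) - (Complex.I • B) * RB
      = -Complex.I • ((RB - RA) * (algebraMap ℂ _ Complex.I - A)) := by
    rw [← mul_resolvent_sub_resolvent_mul hB.I_mem_resolventSet hA.I_mem_resolventSet,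
      mul_smul_comm, smul_mul_assoc, ← smul_sub, neg_smul, ← smul_neg, neg_sub]
  have hf' : ∀ t ∈ Set.Ico (0 : ℝ) 1, ‖(NormedSpace.exp ((1 - t) • (Complex.I • B)) *
      (RB * (Complex.I • A) - (Complex.I • B) * RB) * NormedSpace.exp (t • (Complex.I • A))) x‖
      ≤ C := fun t ht => by
    simp only [hcomm, smul_comm (1 - t) Complex.I B, mul_apply_eq_comp]
    rw [((IsSelfAdjoint.all (1 - t)).smul hB).norm_exp_I_smul_apply]
    simpa [norm_smul] using hC t (Set.Ico_subset_Icc_self ht)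
  have hmv := norm_image_sub_le_of_norm_deriv_le_segment' (fun t _ => (hf t).hasDerivWithinAt) hf'
    1 (Set.right_mem_Icc.2 zero_le_one)
  simpa [f, norm_sub_rev] using hmv

theorem IsSelfAdjoint.tendsto_exp_resolvent_sub_resolvent_exp {ι : Type*} {l : Filter ι}
    {A : ι → H →L[ℂ] H} {A₀ : H →L[ℂ] H} (hA : ∀ i, IsSelfAdjoint (A i))
    (hA₀ : IsSelfAdjoint A₀) (h : ∀ x, Tendsto (fun i => A i x) l (𝓝 (A₀ x))) (x : H) :
    Tendsto (fun i => NormedSpace.exp (Complex.I • A i) (resolvent (A i) Complex.I x)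
      - resolvent (A i) Complex.I (NormedSpace.exp (Complex.I • A₀) x)) l (𝓝 0) := by
  set K := (fun t : ℝ => (algebraMap ℂ _ Complex.I - A₀)
    (NormedSpace.exp (t • (Complex.I • A₀)) x)) '' Set.Icc 0 1
  have hexp : Continuous fun t : ℝ => NormedSpace.exp (t • (Complex.I • A₀)) :=
    continuous_iff_continuousAt.2 fun t => (hasDerivAt_exp_smul_const _ t).continuousAt
  have hK : IsCompact K := isCompact_Icc.image (by fun_prop)
  have hunif : TendstoUniformlyOn (fun i => ⇑(resolvent (A i) Complex.I - resolvent A₀ Complex.I))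
      0 l K := by
    refine tendstoUniformlyOn_of_tendsto_of_norm_le (C := 2) (fun i => ?_) (fun y => ?_) hK
    · exact (norm_sub_le _ _).trans <| by
        linarith [(hA i).norm_resolvent_I_le, hA₀.norm_resolvent_I_le]
    · simpa using tendsto_sub_nhds_zero_iff.2 (hA₀.tendsto_resolvent_I_apply hA h y)
  refine Metric.tendsto_nhds.2 fun ε hε => ?_
  filter_upwards [Metric.tendstoUniformlyOn_iff.1 hunif (ε / 2) (half_pos hε)] with i hi
  rw [dist_zero_right]
  refine (hA₀.norm_exp_resolvent_sub_resolvent_exp_le (hA i) fun t ht => ?_).trans_lt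
    (half_lt_self hε)
  simpa only [Pi.zero_apply, dist_zero_left] using (hi _ (Set.mem_image_of_mem _ ht)).le

end Hilbert

/-- Strong continuity of the exponential map on self-adjoint operators: if a family of
bounded self-adjoint operators converges strongly along a filter to a bounded
self-adjoint operator, then the corresponding unitary exponentials converge strongly.
No uniform norm bound is assumed. -/
theorem exp_strong_continuous_on_selfAdjoint
    {H : Type*} [NormedAddCommGroup H] [InnerProductSpace ℂ H] [CompleteSpace H]
    {ι : Type*} (F : Filter ι)
    (A : ι → (H →L[ℂ] H)) (A₀ : H →L[ℂ] H)
    (hAsa : ∀ i, ∀ ψ χ : H, ⟪A i ψ, χ⟫_ℂ = ⟪ψ, A i χ⟫_ℂ)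
    (hA₀sa : ∀ ψ χ : H, ⟪A₀ ψ, χ⟫_ℂ = ⟪ψ, A₀ χ⟫_ℂ)
    (hconv : ∀ ψ : H, Tendsto (fun i => A i ψ) F (nhds (A₀ ψ))) :
    ∀ ψ : H, Tendsto (fun i => NormedSpace.exp (Complex.I • A i) ψ) F
      (nhds (NormedSpace.exp (Complex.I • A₀) ψ)) := by
  intro ψ
  have hA : ∀ i, IsSelfAdjoint (A i) := fun i =>
    ContinuousLinearMap.isSelfAdjoint_iff_isSymmetric.2 (hAsa i)
  have hA₀ : IsSelfAdjoint A₀ := ContinuousLinearMap.isSelfAdjoint_iff_isSymmetric.2 hA₀sa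
  set R := fun i => resolvent (A i) Complex.I
  set R₀ := resolvent A₀ Complex.I
  set U₀ := NormedSpace.exp (Complex.I • A₀)
  set φ := (algebraMap ℂ _ Complex.I - A₀) ψ
  have hψ : ψ = R₀ φ :=
    (DFunLike.congr_fun (resolvent_mul_algebraMap_sub hA₀.I_mem_resolventSet) ψ).symm
  have hU₀ψ : U₀ ψ = R₀ (U₀ φ) := by
    conv_lhs => rw [hψ]
    exact DFunLike.congr_fun
      (((Commute.refl A₀).smul_right Complex.I).exp_right.resolvent_left Complex.I).eq.symm φ
  have hsplit : ∀ i, NormedSpace.exp (Complex.I • A i) ψ - U₀ ψ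
      = NormedSpace.exp (Complex.I • A i) (R₀ φ - R i φ)
        + (NormedSpace.exp (Complex.I • A i) (R i φ) - R i (U₀ φ)) + (R i (U₀ φ) - R₀ (U₀ φ)) := by
    intro i
    rw [map_sub, hU₀ψ, ← hψ]
    abel
  have hfirst : Tendsto (fun i => NormedSpace.exp (Complex.I • A i) (R₀ φ - R i φ)) F (𝓝 0) := by
    refine tendsto_zero_iff_norm_tendsto_zero.2 ?_
    simpa only [(hA _).norm_exp_I_smul_apply, norm_sub_rev (R₀ φ)] using
      (tendsto_iff_norm_sub_tendsto_zero.1 (hA₀.tendsto_resolvent_I_apply hA hconv φ))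
  rw [← tendsto_sub_nhds_zero_iff]
  simpa only [hsplit, add_zero] using
    (hfirst.add (hA₀.tendsto_exp_resolvent_sub_resolvent_exp hA hconv φ)).add
      (tendsto_sub_nhds_zero_iff.2 (hA₀.tendsto_resolvent_I_apply hA hconv (U₀ φ)))
end

section
/- Let H be a complex Hilbert space, F a filter on an index type ι, and (A_i)_{i∈ι} a family of bounded self-adjoint operators converging strongly along F to a bounded self-adjoint operator A. Then the resolvents converge strongly: for every ψ ∈ H, (A_i + i·1)^{-1} ψ → (A + i·1)^{-1} ψ along F, and likewise (A_i − i·1)^{-1} ψ → (A − i·1)^{-1} ψ along F. (All inverses exist since A ± i·1 is invertible with inverse of norm at most 1 for any bounded self-adjoint A.) -/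
open scoped InnerProductSpace
open Filter Topology

/-! The resolvent identity `R_i - R = R_i (B - B_i) R` reduces strong convergence of the
resolvents `R_i = B_i⁻¹` to strong convergence of the `B_i` at the single vector `R ψ`, provided
the `R_i` are uniformly bounded. For self-adjoint `T` the number `⟪T x, x⟫` is real, so
`Im ⟪(T + c) x, x⟫ = -Im c ‖x‖²`, and Cauchy–Schwarz gives `‖(T + c) x‖ ≥ |Im c| ‖x‖`; hence
`‖(T + c)⁻¹‖ ≤ |Im c|⁻¹` uniformly in `T`. -/

theorem ContinuousLinearMap.tendsto_ring_inverse_apply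
    {𝕜 E ι : Type*} [NontriviallyNormedField 𝕜] [NormedAddCommGroup E] [NormedSpace 𝕜 E]
    {F : Filter ι} {B : ι → E →L[𝕜] E} {B₀ : E →L[𝕜] E}
    (hB : ∀ i, IsUnit (B i)) (hB₀ : IsUnit B₀) {C : ℝ} (hC : ∀ i, ‖Ring.inverse (B i)‖ ≤ C)
    (hconv : ∀ ψ, Tendsto (fun i => B i ψ) F (𝓝 (B₀ ψ))) (ψ : E) :
    Tendsto (fun i => Ring.inverse (B i) ψ) F (𝓝 (Ring.inverse B₀ ψ)) := by
  set φ := Ring.inverse B₀ ψ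
  have hdiff : ∀ i, Ring.inverse (B i) ψ - φ = Ring.inverse (B i) (B₀ φ - B i φ) := fun i => by
    simpa using congr($(Ring.inverse_sub_inverse (iff_of_true (hB i) hB₀)) ψ)
  have hlim : Tendsto (fun i => C * ‖B₀ φ - B i φ‖) F (𝓝 0) := by
    simpa [norm_sub_rev] using (tendsto_iff_norm_sub_tendsto_zero.mp (hconv φ)).const_mul C
  refine tendsto_iff_norm_sub_tendsto_zero.mpr
    (squeeze_zero (fun _ => norm_nonneg _) (fun i => ?_) hlim)
  rw [hdiff]
  exact (Ring.inverse (B i)).le_of_opNorm_le (hC i) _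

theorem LinearMap.IsSymmetric.abs_im_mul_norm_le_norm_add_smul
    {𝕜 E : Type*} [RCLike 𝕜] [NormedAddCommGroup E] [InnerProductSpace 𝕜 E]
    {T : E →ₗ[𝕜] E} (hT : T.IsSymmetric) (c : 𝕜) (x : E) :
    |RCLike.im c| * ‖x‖ ≤ ‖T x + c • x‖ := by
  rcases eq_or_ne x 0 with rfl | hx
  · simp
  have him : RCLike.im ⟪T x + c • x, x⟫_𝕜 = -RCLike.im c * ‖x‖ ^ 2 := by
    simp [inner_add_left, inner_smul_left, inner_self_eq_norm_sq_to_K, hT]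
  have : |RCLike.im c| * ‖x‖ * ‖x‖ ≤ ‖T x + c • x‖ * ‖x‖ := calc
    |RCLike.im c| * ‖x‖ * ‖x‖ = |RCLike.im ⟪T x + c • x, x⟫_𝕜| := by
      rw [him, abs_mul, abs_neg, abs_of_nonneg (sq_nonneg ‖x‖)]; ring
    _ ≤ ‖⟪T x + c • x, x⟫_𝕜‖ := RCLike.abs_im_le_norm _
    _ ≤ ‖T x + c • x‖ * ‖x‖ := norm_inner_le_norm _ _
  exact le_of_mul_le_mul_right this (norm_pos_iff.mpr hx)

section SelfAdjoint

variable {H : Type*} [NormedAddCommGroup H] [InnerProductSpace ℂ H] [CompleteSpace H]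
  {T : H →L[ℂ] H}

theorem IsSelfAdjoint.isUnit_add_smul_one (hT : IsSelfAdjoint T) {c : ℂ} (hc : c.im ≠ 0) :
    IsUnit (T + c • (1 : H →L[ℂ] H)) := by
  have hmem : -c ∉ spectrum ℂ T := fun h => hc (by simpa using hT.im_eq_zero_of_mem_spectrum h)
  have := (spectrum.notMem_iff.mp hmem).neg
  rwa [Algebra.algebraMap_eq_smul_one, neg_sub, neg_smul, sub_neg_eq_add] at this

theorem IsSelfAdjoint.norm_ring_inverse_add_smul_one_le (hT : IsSelfAdjoint T) {c : ℂ}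
    (hc : c.im ≠ 0) : ‖Ring.inverse (T + c • (1 : H →L[ℂ] H))‖ ≤ |c.im|⁻¹ := by
  refine ContinuousLinearMap.opNorm_le_bound _ (by positivity) fun x => ?_
  set y := Ring.inverse (T + c • (1 : H →L[ℂ] H)) x
  have hy : T y + c • y = x := by
    simpa using congr($(Ring.mul_inverse_cancel _ (hT.isUnit_add_smul_one hc)) x)
  have := hT.isSymmetric.abs_im_mul_norm_le_norm_add_smul c y
  simp only [ContinuousLinearMap.coe_coe, hy, RCLike.im_to_complex] at this
  rwa [le_inv_mul_iff₀ (abs_pos.mpr hc)]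

theorem IsSelfAdjoint.tendsto_ring_inverse_add_smul_one_apply {ι : Type*} {F : Filter ι}
    {A : ι → H →L[ℂ] H} (hA : ∀ i, IsSelfAdjoint (A i)) (hT : IsSelfAdjoint T)
    (hconv : ∀ ψ, Tendsto (fun i => A i ψ) F (𝓝 (T ψ))) {c : ℂ} (hc : c.im ≠ 0) (ψ : H) :
    Tendsto (fun i => Ring.inverse (A i + c • (1 : H →L[ℂ] H)) ψ) F
      (𝓝 (Ring.inverse (T + c • (1 : H →L[ℂ] H)) ψ)) :=
  ContinuousLinearMap.tendsto_ring_inverse_apply (fun i => (hA i).isUnit_add_smul_one hc)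
    (hT.isUnit_add_smul_one hc) (fun i => (hA i).norm_ring_inverse_add_smul_one_le hc)
    (fun φ => by simpa using (hconv φ).add_const (c • φ)) ψ

end SelfAdjoint

/-- Strong convergence of resolvents: if a family of bounded self-adjoint operators
converges strongly along a filter to a bounded self-adjoint operator, then the
resolvents at `±i` converge strongly as well. -/
theorem resolvent_strong_continuous_on_selfAdjoint
    {H : Type*} [NormedAddCommGroup H] [InnerProductSpace ℂ H] [CompleteSpace H]
    {ι : Type*} (F : Filter ι)
    (A : ι → (H →L[ℂ] H)) (A₀ : H →L[ℂ] H)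
    (hAsa : ∀ i, ∀ ψ χ : H, ⟪A i ψ, χ⟫_ℂ = ⟪ψ, A i χ⟫_ℂ)
    (hA₀sa : ∀ ψ χ : H, ⟪A₀ ψ, χ⟫_ℂ = ⟪ψ, A₀ χ⟫_ℂ)
    (hconv : ∀ ψ : H, Tendsto (fun i => A i ψ) F (nhds (A₀ ψ))) :
    (∀ ψ : H, Tendsto
      (fun i => Ring.inverse (A i + Complex.I • (1 : H →L[ℂ] H)) ψ) F
      (nhds (Ring.inverse (A₀ + Complex.I • (1 : H →L[ℂ] H)) ψ))) ∧
    (∀ ψ : H, Tendsto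
      (fun i => Ring.inverse (A i - Complex.I • (1 : H →L[ℂ] H)) ψ) F
      (nhds (Ring.inverse (A₀ - Complex.I • (1 : H →L[ℂ] H)) ψ))) := by
  have hA : ∀ i, IsSelfAdjoint (A i) := fun i => LinearMap.IsSymmetric.isSelfAdjoint (hAsa i)
  have hA₀ : IsSelfAdjoint A₀ := LinearMap.IsSymmetric.isSelfAdjoint hA₀sa
  refine ⟨hA₀.tendsto_ring_inverse_add_smul_one_apply hA hconv (by simp), fun ψ => ?_⟩
  simpa [sub_eq_add_neg] using
    hA₀.tendsto_ring_inverse_add_smul_one_apply hA hconv (c := -Complex.I) (by simp) ψ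
end

section
/- Let H be a complex Hilbert space with Hilbert basis (φ_k)_{k∈ℕ}, let F_k = |φ_k⟩⟨φ_k| be the associated rank-one projections, and let H_1, …, H_N be bounded self-adjoint operators on H. If v ≠ w and ⟪φ_v, H_l φ_w⟫ ≠ 0 for some l ∈ {1, …, N}, then both rank-one operators |φ_v⟩⟨φ_w| and |φ_w⟩⟨φ_v| belong to the complex Lie subalgebra of the bounded operators on H generated by the set {F_k : k ∈ ℕ} ∪ {H_1, …, H_N} (the Lie span: the smallest ℂ-subspace containing the set and closed under the commutator ⁅X, Y⁆ = XY − YX). -/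
/-!
Write `P = F_v`, `Q = F_w` and `A = H_l`. Since `P Q = Q P = 0` and `P² = P`, the iterated
commutators `C = ⁅P, ⁅Q, A⁆⁆ = -(P A Q + Q A P)` and `⁅P, C⁆ = Q A P - P A Q` isolate the two
corners `P A Q = ⟪φ_v, A φ_w⟫ |φ_v⟩⟨φ_w|` and `Q A P = ⟪φ_w, A φ_v⟫ |φ_w⟩⟨φ_v|`; self-adjointness
makes the second coefficient the conjugate of the first, so both are nonzero.
-/

open scoped InnerProductSpace

attribute [local instance 100] LieRing.ofAssociativeRing

section OrthogonalCorners

variable {R A : Type*} [CommRing R] [Ring A] [Algebra R A]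

theorem lie_lie_of_mul_eq_zero {p q : A} (hpq : p * q = 0) (hqp : q * p = 0) (a : A) :
    ⁅p, ⁅q, a⁆⁆ = -(p * a * q + q * a * p) := by
  simp only [Ring.lie_def, mul_sub, sub_mul, ← mul_assoc, hpq, zero_mul]
  simp only [mul_assoc, hqp, mul_zero]
  abel

theorem lie_lie_lie_of_mul_eq_zero {p q : A} (hp : IsIdempotentElem p) (hpq : p * q = 0)
    (hqp : q * p = 0) (a : A) :
    ⁅p, ⁅p, ⁅q, a⁆⁆⁆ = q * a * p - p * a * q := by
  rw [lie_lie_of_mul_eq_zero hpq hqp, Ring.lie_def]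
  simp only [mul_neg, neg_mul, mul_add, add_mul, ← mul_assoc, hp.eq, hpq, zero_mul]
  simp only [mul_assoc, hqp, mul_zero, hp.eq]
  abel

variable [Invertible (2 : R)]

theorem LieSubalgebra.mul_mul_mem_of_mul_eq_zero (L : LieSubalgebra R A) {p q a : A}
    (hp : IsIdempotentElem p) (hpq : p * q = 0) (hqp : q * p = 0)
    (hpL : p ∈ L) (hqL : q ∈ L) (haL : a ∈ L) :
    p * a * q ∈ L ∧ q * a * p ∈ L := by
  have hC : ⁅p, ⁅q, a⁆⁆ ∈ L := L.lie_mem hpL (L.lie_mem hqL haL)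
  have hD : ⁅p, ⁅p, ⁅q, a⁆⁆⁆ ∈ L := L.lie_mem hpL hC
  rw [lie_lie_of_mul_eq_zero hpq hqp] at hC
  rw [lie_lie_lie_of_mul_eq_zero hp hpq hqp] at hD
  have half_mem : ∀ x : A, (2 : R) • x ∈ L → x ∈ L := fun x hx => by
    simpa only [smul_smul, invOf_mul_self, one_smul] using L.smul_mem (⅟2 : R) hx
  constructor
  · refine half_mem _ ?_
    rw [show (2 : R) • (p * a * q) = -(-(p * a * q + q * a * p) + (q * a * p - p * a * q)) by
      module]
    exact L.neg_mem (L.add_mem hC hD)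
  · refine half_mem _ ?_
    rw [show (2 : R) • (q * a * p) = (q * a * p - p * a * q) - -(p * a * q + q * a * p) by
      module]
    exact L.sub_mem hD hC

end OrthogonalCorners

namespace InnerProductSpace

variable {𝕜 E : Type*} [RCLike 𝕜] [NormedAddCommGroup E] [InnerProductSpace 𝕜 E]

theorem rankOne_mul_mul_rankOne (x y : E) (T : E →L[𝕜] E) :
    rankOne 𝕜 x x * T * rankOne 𝕜 y y = ⟪x, T y⟫_𝕜 • rankOne 𝕜 x y := by
  rw [mul_assoc, ContinuousLinearMap.mul_def, ContinuousLinearMap.mul_def,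
    comp_rankOne, rankOne_comp_rankOne]

theorem rankOne_self_mul_rankOne_self_of_inner_eq_zero {x y : E} (h : ⟪x, y⟫_𝕜 = 0) :
    rankOne 𝕜 x x * rankOne 𝕜 y y = 0 := by
  rw [ContinuousLinearMap.mul_def, rankOne_comp_rankOne, h, zero_smul]

end InnerProductSpace

open InnerProductSpace

theorem ketbra_mem_lieSpan_of_nonzero_matrix_element_general
    {H : Type*} [NormedAddCommGroup H] [InnerProductSpace ℂ H]
    (φ : HilbertBasis ℕ ℂ H) (N : ℕ) (Hc : Fin N → (H →L[ℂ] H))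
    (hHcsa : ∀ j, ∀ ψ χ : H, ⟪Hc j ψ, χ⟫_ℂ = ⟪ψ, Hc j χ⟫_ℂ)
    (v w : ℕ) (hvw : v ≠ w) (l : Fin N) (hl : ⟪(φ v : H), Hc l (φ w)⟫_ℂ ≠ 0) :
    (innerSL ℂ (φ w : H)).smulRight (φ v : H) ∈ LieSubalgebra.lieSpan ℂ (H →L[ℂ] H)
      ((Set.range fun k : ℕ => (innerSL ℂ (φ k : H)).smulRight (φ k : H)) ∪
        Set.range Hc) ∧
    (innerSL ℂ (φ v : H)).smulRight (φ w : H) ∈ LieSubalgebra.lieSpan ℂ (H →L[ℂ] H)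
      ((Set.range fun k : ℕ => (innerSL ℂ (φ k : H)).smulRight (φ k : H)) ∪
        Set.range Hc) := by
  set L := LieSubalgebra.lieSpan ℂ (H →L[ℂ] H)
    ((Set.range fun k : ℕ => rankOne ℂ (φ k : H) (φ k)) ∪ Set.range Hc)
  have hF (k : ℕ) : rankOne ℂ (φ k : H) (φ k) ∈ L :=
    LieSubalgebra.subset_lieSpan (Or.inl ⟨k, rfl⟩)
  have hA : Hc l ∈ L := LieSubalgebra.subset_lieSpan (Or.inr ⟨l, rfl⟩)
  have hl' : ⟪(φ w : H), Hc l (φ v)⟫_ℂ ≠ 0 := by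
    rwa [← hHcsa, ← inner_conj_symm, map_ne_zero]
  obtain ⟨hvw_mem, hwv_mem⟩ := L.mul_mul_mem_of_mul_eq_zero
    (isIdempotentElem_rankOne_self (φ.orthonormal.1 v))
    (rankOne_self_mul_rankOne_self_of_inner_eq_zero (φ.orthonormal.2 hvw))
    (rankOne_self_mul_rankOne_self_of_inner_eq_zero (φ.orthonormal.2 hvw.symm))
    (hF v) (hF w) hA
  rw [rankOne_mul_mul_rankOne] at hvw_mem hwv_mem
  exact ⟨(L.toSubmodule.smul_mem_iff hl).mp hvw_mem, (L.toSubmodule.smul_mem_iff hl').mp hwv_mem⟩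

/-- Step in the proof of Theorem 2 of the paper: if `v ≠ w` and some control Hamiltonian
`H_l` has a nonzero matrix element `⟪φ_v, H_l φ_w⟫`, then the rank-one operators
`|φ_v⟩⟨φ_w|` and `|φ_w⟩⟨φ_v|` lie in the complex Lie algebra generated by the rank-one
projections `F_k = |φ_k⟩⟨φ_k|` and the control Hamiltonians. -/
theorem ketbra_mem_lieSpan_of_nonzero_matrix_element
    {H : Type*} [NormedAddCommGroup H] [InnerProductSpace ℂ H] [CompleteSpace H]
    (φ : HilbertBasis ℕ ℂ H) (N : ℕ) (Hc : Fin N → (H →L[ℂ] H))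
    (hHcsa : ∀ j, ∀ ψ χ : H, ⟪Hc j ψ, χ⟫_ℂ = ⟪ψ, Hc j χ⟫_ℂ)
    (v w : ℕ) (hvw : v ≠ w) (l : Fin N) (hl : ⟪(φ v : H), Hc l (φ w)⟫_ℂ ≠ 0) :
    (innerSL ℂ (φ w : H)).smulRight (φ v : H) ∈ LieSubalgebra.lieSpan ℂ (H →L[ℂ] H)
      ((Set.range fun k : ℕ => (innerSL ℂ (φ k : H)).smulRight (φ k : H)) ∪
        Set.range Hc) ∧
    (innerSL ℂ (φ v : H)).smulRight (φ w : H) ∈ LieSubalgebra.lieSpan ℂ (H →L[ℂ] H)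
      ((Set.range fun k : ℕ => (innerSL ℂ (φ k : H)).smulRight (φ k : H)) ∪
        Set.range Hc) :=
  ketbra_mem_lieSpan_of_nonzero_matrix_element_general φ N Hc hHcsa v w hvw l hl
end

section
/- Let H be a complex Hilbert space with Hilbert basis (φ_k)_{k∈ℕ}, let F_k = |φ_k⟩⟨φ_k|, and let H_1, …, H_N be bounded self-adjoint operators on H such that {H_1, …, H_N} is connected with respect to (φ_k). Then the complex Lie subalgebra L of the bounded operators on H generated by {F_k : k ∈ ℕ} ∪ {H_1, …, H_N} (the smallest ℂ-subspace containing the set and closed under the commutator ⁅X, Y⁆ = XY − YX) is dense in the strong operator topology: for every bounded operator T on H, every ε > 0 and every finite family ψ_1, …, ψ_M ∈ H, there exists L ∈ L with ‖L ψ_j − T ψ_j‖ < ε for all j = 1, …, M. -/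
/-!
For `v ≠ w`, sandwiching a generator `A` between the projections `F_v`, `F_w` stays in the Lie
algebra, because `2 F_v A F_w = ⁅⁅F_v, A⁆, F_w⁆ + ⁅F_v, ⁅⁅F_v, A⁆, F_w⁆⁆`; and
`F_v A F_w = ⟪φ_v, A φ_w⟫ |φ_v⟩⟨φ_w|`. So every edge of the graph yields a matrix unit
`|φ_v⟩⟨φ_w|` (self-adjointness makes the edge relation symmetric), and the commutators
`⁅|φ_u⟩⟨φ_x|, |φ_x⟩⟨φ_w|⁆ = |φ_u⟩⟨φ_w|` propagate matrix units along paths, so connectivity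
yields all of them. Hence the compressions `P_s T P_s` by the finite-rank projections
`P_s = ∑_{k ∈ s} F_k` lie in the Lie algebra; they converge strongly to `T` because `P_s → 1`
strongly and `‖P_s‖ ≤ 1`.
-/

open scoped InnerProductSpace

attribute [local instance 100] LieRing.ofAssociativeRing

open InnerProductSpace Filter Topology

theorem LieSubalgebra.mul_mul_mem_of_isIdempotentElem {R A : Type*} [CommRing R] [Ring A]
    [Algebra R A] (L : LieSubalgebra R A) (h2 : IsUnit (2 : R)) {p q a : A}
    (hp : IsIdempotentElem p) (hpq : p * q = 0) (hqp : q * p = 0)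
    (hpL : p ∈ L) (hqL : q ∈ L) (haL : a ∈ L) : p * a * q ∈ L := by
  have hpq' (x : A) : p * (q * x) = 0 := by rw [← mul_assoc, hpq, zero_mul]
  have hqp' (x : A) : q * (p * x) = 0 := by rw [← mul_assoc, hqp, zero_mul]
  have hpp (x : A) : p * (p * x) = p * x := by rw [← mul_assoc, hp.eq]
  have hb : ⁅⁅p, a⁆, q⁆ = p * a * q + q * a * p := by
    simp only [Ring.lie_def, sub_mul, mul_sub, mul_assoc, hpq, hqp', mul_zero]
    abel
  have hc : ⁅p, p * a * q + q * a * p⁆ = p * a * q - q * a * p := by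
    simp only [Ring.lie_def, mul_add, add_mul, mul_assoc, hp.eq, hpp, hpq', hqp, mul_zero]
    abel
  have hsum : ⁅⁅p, a⁆, q⁆ + ⁅p, ⁅⁅p, a⁆, q⁆⁆ = (2 : R) • (p * a * q) := by
    rw [hb, hc, two_smul]; abel
  have hb_mem : ⁅⁅p, a⁆, q⁆ ∈ L := L.lie_mem (L.lie_mem hpL haL) hqL
  have h2_mem : (2 : R) • (p * a * q) ∈ L := hsum ▸ L.add_mem hb_mem (L.lie_mem hpL hb_mem)
  simpa [smul_smul] using L.smul_mem (↑h2.unit⁻¹ : R) h2_mem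

section RankOne

variable {𝕜 E ι : Type*} [RCLike 𝕜] [NormedAddCommGroup E] [InnerProductSpace 𝕜 E]

theorem InnerProductSpace.rankOne_mul_mul_rankOne_s19 (x y z w : E) (A : E →L[𝕜] E) :
    rankOne 𝕜 x y * A * rankOne 𝕜 z w = ⟪y, A z⟫_𝕜 • rankOne 𝕜 x w := by
  ext u
  simp [smul_smul, mul_comm]

namespace Orthonormal

variable {v : ι → E} (hv : Orthonormal 𝕜 v)
include hv

theorem rankOne_mul_rankOne_self (i j k : ι) :
    rankOne 𝕜 (v i) (v j) * rankOne 𝕜 (v j) (v k) = rankOne 𝕜 (v i) (v k) := by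
  rw [ContinuousLinearMap.mul_def, rankOne_comp_rankOne, inner_self_eq_norm_sq_to_K,
    hv.norm_eq_one, RCLike.ofReal_one, one_pow, one_smul]

theorem rankOne_mul_rankOne_of_ne (i l : ι) {j k : ι} (hjk : j ≠ k) :
    rankOne 𝕜 (v i) (v j) * rankOne 𝕜 (v k) (v l) = 0 := by
  rw [ContinuousLinearMap.mul_def, rankOne_comp_rankOne, hv.inner_eq_zero hjk, zero_smul]

theorem lie_rankOne_rankOne {i k : ι} (hik : i ≠ k) (j : ι) :
    ⁅rankOne 𝕜 (v i) (v j), rankOne 𝕜 (v j) (v k)⁆ = rankOne 𝕜 (v i) (v k) := by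
  rw [Ring.lie_def, hv.rankOne_mul_rankOne_self, hv.rankOne_mul_rankOne_of_ne _ _ hik.symm,
    sub_zero]

variable (L : LieSubalgebra 𝕜 (E →L[𝕜] E)) (hL : ∀ k, rankOne 𝕜 (v k) (v k) ∈ L)
include hL

theorem rankOne_mem_of_inner_ne_zero {A : E →L[𝕜] E} (hA : A ∈ L) {i j : ι} (hij : i ≠ j)
    (h : ⟪v i, A (v j)⟫_𝕜 ≠ 0) : rankOne 𝕜 (v i) (v j) ∈ L := by
  have hmem := L.mul_mul_mem_of_isIdempotentElem (isUnit_iff_ne_zero.mpr two_ne_zero)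
    (isIdempotentElem_rankOne_self (hv.norm_eq_one i))
    (hv.rankOne_mul_rankOne_of_ne _ _ hij) (hv.rankOne_mul_rankOne_of_ne _ _ hij.symm)
    (hL i) (hL j) hA
  rw [rankOne_mul_mul_rankOne_s19] at hmem
  simpa [smul_smul, h] using L.smul_mem (⟪v i, A (v j)⟫_𝕜)⁻¹ hmem

theorem rankOne_mem_of_adj {N : Type*} {A : N → E →L[𝕜] E} (hA : ∀ l, A l ∈ L)
    (hsymm : ∀ l, (A l : E →ₗ[𝕜] E).IsSymmetric) {i j : ι}
    (h : (SimpleGraph.fromRel fun i j => ∃ l, ⟪v i, A l (v j)⟫_𝕜 ≠ 0).Adj i j) :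
    rankOne 𝕜 (v i) (v j) ∈ L := by
  obtain ⟨hij, ⟨l, hl⟩ | ⟨l, hl⟩⟩ := h
  · exact hv.rankOne_mem_of_inner_ne_zero L hL (hA l) hij hl
  · refine hv.rankOne_mem_of_inner_ne_zero L hL (hA l) hij ?_
    rw [← inner_conj_symm, ← ContinuousLinearMap.coe_coe, hsymm l, map_ne_zero]
    exact hl

theorem rankOne_mem_of_reachable {G : SimpleGraph ι}
    (hG : ∀ i j, G.Adj i j → rankOne 𝕜 (v i) (v j) ∈ L) {i j : ι} (h : G.Reachable i j) :
    rankOne 𝕜 (v i) (v j) ∈ L := by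
  obtain ⟨p⟩ := h
  induction p with
  | nil => exact hL _
  | @cons i k j hik _ ih =>
    obtain rfl | hij := eq_or_ne i j
    · exact hL i
    · exact hv.lie_rankOne_rankOne hij k ▸ L.lie_mem (hG i k hik) ih

end Orthonormal
end RankOne

theorem ContinuousLinearMap.tendsto_comp_apply_of_norm_le {𝕜 E F G α : Type*}
    [NontriviallyNormedField 𝕜] [NormedAddCommGroup E] [NormedSpace 𝕜 E]
    [NormedAddCommGroup F] [NormedSpace 𝕜 F] [NormedAddCommGroup G] [NormedSpace 𝕜 G]
    {l : Filter α} {A : α → F →L[𝕜] G} {B : α → E →L[𝕜] F} {A₀ : F →L[𝕜] G} {B₀ : E →L[𝕜] F}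
    {C : ℝ} (hC : ∀ a, ‖A a‖ ≤ C) {x : E}
    (hA : Tendsto (fun a => A a (B₀ x)) l (𝓝 (A₀ (B₀ x))))
    (hB : Tendsto (fun a => B a x) l (𝓝 (B₀ x))) :
    Tendsto (fun a => (A a ∘L B a) x) l (𝓝 ((A₀ ∘L B₀) x)) := by
  have hdiff : Tendsto (fun a => A a (B a x) - A a (B₀ x)) l (𝓝 0) := by
    refine squeeze_zero_norm (fun a => ?_)
      (by simpa using (tendsto_iff_norm_sub_tendsto_zero.1 hB).const_mul C)
    rw [← map_sub]
    exact (A a).le_of_opNorm_le (hC a) _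
  simpa using hdiff.add hA

section Compression

variable {𝕜 E ι : Type*} [RCLike 𝕜] [NormedAddCommGroup E] [InnerProductSpace 𝕜 E]

theorem InnerProductSpace.sum_rankOne_mul_mul_sum_rankOne_mem (S : Submodule 𝕜 (E →L[𝕜] E))
    {v : ι → E} (hS : ∀ i j, rankOne 𝕜 (v i) (v j) ∈ S) (T : E →L[𝕜] E) (s : Finset ι) :
    (∑ i ∈ s, rankOne 𝕜 (v i) (v i)) * T * ∑ j ∈ s, rankOne 𝕜 (v j) (v j) ∈ S := by
  rw [Finset.sum_mul, Finset.sum_mul]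
  refine S.sum_mem fun i _ => ?_
  rw [Finset.mul_sum]
  refine S.sum_mem fun j _ => ?_
  rw [rankOne_mul_mul_rankOne_s19]
  exact S.smul_mem _ (hS i j)

theorem HilbertBasis.tendsto_sum_rankOne_apply (b : HilbertBasis ι 𝕜 E) (x : E) :
    Tendsto (fun s : Finset ι => (∑ i ∈ s, rankOne 𝕜 (b i) (b i)) x) atTop (𝓝 x) := by
  have : Tendsto (fun s : Finset ι => ∑ i ∈ s, b.repr x i • b i) atTop (𝓝 x) := b.hasSum_repr x
  simpa [b.repr_apply_apply] using this

variable [CompleteSpace E]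

theorem Orthonormal.isStarProjection_sum_rankOne {v : ι → E} (hv : Orthonormal 𝕜 v)
    (s : Finset ι) : IsStarProjection (∑ i ∈ s, rankOne 𝕜 (v i) (v i)) := by
  classical
  induction s using Finset.induction_on with
  | empty => simp
  | insert k s hk ih =>
    rw [Finset.sum_insert hk]
    refine (isStarProjection_rankOne_self (hv.norm_eq_one k)).add ih ?_
    rw [Finset.mul_sum]
    exact Finset.sum_eq_zero fun i hi =>
      hv.rankOne_mul_rankOne_of_ne _ _ (ne_of_mem_of_not_mem hi hk).symm

theorem HilbertBasis.tendsto_compression_apply (b : HilbertBasis ι 𝕜 E) (T : E →L[𝕜] E)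
    (x : E) :
    Tendsto (fun s : Finset ι =>
        ((∑ i ∈ s, rankOne 𝕜 (b i) (b i)) * T * ∑ i ∈ s, rankOne 𝕜 (b i) (b i)) x)
      atTop (𝓝 (T x)) := by
  have hP := b.tendsto_sum_rankOne_apply (𝕜 := 𝕜)
  have := ContinuousLinearMap.tendsto_comp_apply_of_norm_le (A₀ := .id 𝕜 E) (B₀ := T)
    (B := fun s : Finset ι => T ∘L ∑ i ∈ s, rankOne 𝕜 (b i) (b i))
    (fun s => (b.orthonormal.isStarProjection_sum_rankOne s).norm_le) (hP (T x))
    ((T.continuous.tendsto x).comp (hP x))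
  simpa only [mul_assoc, ContinuousLinearMap.mul_def, ContinuousLinearMap.comp_assoc,
    ContinuousLinearMap.id_comp] using this

end Compression

/-- Eq. (20) in the proof of Theorem 2 of the paper: if the set of bounded self-adjoint
control Hamiltonians `{H_1, …, H_N}` is connected with respect to the Hilbert basis
`(φ_k)`, then the complex Lie algebra generated by the rank-one projections
`F_k = |φ_k⟩⟨φ_k|` together with the `H_l` is dense in all bounded operators in the
strong operator topology. -/
theorem lieSpan_strongly_dense_of_connected
    {H : Type*} [NormedAddCommGroup H] [InnerProductSpace ℂ H] [CompleteSpace H]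
    (φ : HilbertBasis ℕ ℂ H) (N : ℕ) (Hc : Fin N → (H →L[ℂ] H))
    (hHcsa : ∀ j, ∀ ψ χ : H, ⟪Hc j ψ, χ⟫_ℂ = ⟪ψ, Hc j χ⟫_ℂ)
    (hconn : (SimpleGraph.fromRel
        (fun v w : ℕ => ∃ l : Fin N, ⟪(φ v : H), Hc l (φ w)⟫_ℂ ≠ 0)).Connected)
    (T : H →L[ℂ] H) (ε : ℝ) (hε : 0 < ε) (M : ℕ) (ψ : Fin M → H) :
    ∃ L ∈ LieSubalgebra.lieSpan ℂ (H →L[ℂ] H)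
        ((Set.range fun k : ℕ => (innerSL ℂ (φ k : H)).smulRight (φ k : H)) ∪
          Set.range Hc),
      ∀ j : Fin M, ‖L (ψ j) - T (ψ j)‖ < ε := by
  -- `rankOne ℂ x y` unfolds to `(innerSL ℂ y).smulRight x`
  set L := LieSubalgebra.lieSpan ℂ (H →L[ℂ] H)
    ((Set.range fun k : ℕ => rankOne ℂ (φ k : H) (φ k)) ∪ Set.range Hc)
  have hF (k : ℕ) : rankOne ℂ (φ k : H) (φ k) ∈ L :=
    LieSubalgebra.subset_lieSpan (Or.inl ⟨k, rfl⟩)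
  have hHc (l : Fin N) : Hc l ∈ L := LieSubalgebra.subset_lieSpan (Or.inr ⟨l, rfl⟩)
  have hE (i j : ℕ) : rankOne ℂ (φ i : H) (φ j) ∈ L :=
    φ.orthonormal.rankOne_mem_of_reachable L hF
      (fun _ _ => φ.orthonormal.rankOne_mem_of_adj L hF hHc hHcsa) (hconn.preconnected i j)
  have hclose (j : Fin M) := (tendsto_iff_norm_sub_tendsto_zero.1
    (φ.tendsto_compression_apply T (ψ j))).eventually_lt_const hε
  obtain ⟨s, hs⟩ := (eventually_all.2 hclose).exists
  exact ⟨_, sum_rankOne_mul_mul_sum_rankOne_mem L.toSubmodule hE T s, hs⟩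
end
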